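/- arXiv:2310.00765 — 7 statements merged into one kernel-verified Lean document; each statement's English description precedes it below -/
import Mathlib

section
/- If G is a Hopfian abelian group, then G is generalized co-Bassian if and only if G is co-Bassian. -/
/-- The subgroup of elements annihilated by some power of `p`
(the `p`-primary component). -/
def pComponent (G : Type*) [AddCommGroup G] (p : ℕ) : AddSubgroup G where
  carrier := {x | ∃ k : ℕ, p ^ k • x = 0}
  zero_mem' := ⟨0, smul_zero _⟩
  add_mem' := by
    rintro a b ⟨k, hk⟩ ⟨l, hl⟩
    exact ⟨k + l, by
      rw [smul_add, pow_add, mul_smul, mul_smul, smul_comm (p ^ k) (p ^ l) a, hk, hl,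
        smul_zero, smul_zero, add_zero]⟩
  neg_mem' := by
    rintro a ⟨k, hk⟩
    exact ⟨k, by rw [smul_neg, hk, neg_zero]⟩

/-- The torsion subgroup. -/
def torsionSub (G : Type*) [AddCommGroup G] : AddSubgroup G where
  carrier := {x | ∃ n : ℕ, 0 < n ∧ n • x = 0}
  zero_mem' := ⟨1, one_pos, smul_zero _⟩
  add_mem' := by
    rintro a b ⟨m, hm, hma⟩ ⟨n, hn, hnb⟩
    exact ⟨m * n, Nat.mul_pos hm hn, by
      rw [smul_add, mul_smul, mul_smul, smul_comm m n a, hma, hnb, smul_zero, smul_zero,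
        add_zero]⟩
  neg_mem' := by
    rintro a ⟨n, hn, hna⟩
    exact ⟨n, hn, by rw [smul_neg, hna, neg_zero]⟩

/-- A subgroup `A` is essential in a direct summand of the ambient group. -/
def EssentialInSummand {G : Type*} [AddCommGroup G] (A : AddSubgroup G) : Prop :=
  ∃ S S' : AddSubgroup G, IsCompl S S' ∧ A ≤ S ∧
    ∀ X : AddSubgroup G, X ≤ S → X ≠ ⊥ → A ⊓ X ≠ ⊥

/-- Semi-generalized co-Bassian group. -/
def IsSGCB (G : Type*) [AddCommGroup G] : Prop :=
  ∀ (N : AddSubgroup G) (φ : G →+ G ⧸ N), Function.Injective φ →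
    EssentialInSummand φ.range

/-- Divisible abelian group. -/
def IsDivisibleGroup (G : Type*) [AddCommGroup G] : Prop :=
  ∀ (x : G) (n : ℕ), 0 < n → ∃ y : G, n • y = x

/-- Elementary abelian group: torsion, and each `p`-primary component is killed by `p`. -/
def IsElementaryGroup (G : Type*) [AddCommGroup G] : Prop :=
  (∀ x : G, ∃ n : ℕ, 0 < n ∧ n • x = 0) ∧
    ∀ p : ℕ, p.Prime → ∀ x : G, x ∈ pComponent G p → p • x = 0

/-- `G` decomposes as (divisible) ⊕ (elementary). -/
def IsDplusE (G : Type*) [AddCommGroup G] : Prop :=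
  ∃ D E : AddSubgroup G, IsCompl D E ∧ IsDivisibleGroup ↥D ∧ IsElementaryGroup ↥E

/-- The Prüfer `p`-group, realized as the `p`-primary component of `ℚ/ℤ`. -/
def PruferGroup (p : ℕ) : Type :=
  ↥(pComponent (ℚ ⧸ AddSubgroup.zmultiples (1 : ℚ)) p)

instance (p : ℕ) : AddCommGroup (PruferGroup p) :=
  inferInstanceAs (AddCommGroup ↥(pComponent (ℚ ⧸ AddSubgroup.zmultiples (1 : ℚ)) p))

/-- `Z_{p^α}` for `α ∈ ℕ ∪ {∞}`: the cyclic group `ZMod (p^n)` for `α = n` finite,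
and the Prüfer `p`-group for `α = ∞`. -/
def Zp (p : ℕ) (α : ℕ∞) : Type :=
  WithTop.recTopCoe (PruferGroup p) (fun n => ZMod (p ^ n)) α

instance (p : ℕ) (α : ℕ∞) : AddCommGroup (Zp p α) := by
  induction α using WithTop.recTopCoe with
  | top => exact inferInstanceAs (AddCommGroup (PruferGroup p))
  | coe n => exact inferInstanceAs (AddCommGroup (ZMod (p ^ n)))

/-- A `p`-group has generalized finite `p`-rank if it is a finite direct sum of
homocyclic components `Z_{p^{σ_j}}^{(ρ_j)}` with `σ_1 < ⋯ < σ_n` in `ω ∪ {∞}` and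
`ρ_j` finite for all `j > 1`. -/
def HasGenFiniteRank (p : ℕ) (H : Type u) [AddCommGroup H] : Prop :=
  ∃ (n : ℕ) (σ : Fin n → ℕ∞) (ρ : Fin n → Type u),
    StrictMono σ ∧ (∀ j : Fin n, 0 < j.val → Finite (ρ j)) ∧
      Nonempty (H ≃+ DirectSum (Fin n) (fun j => ρ j →₀ Zp p (σ j)))


/-- Hopfian group: every surjective endomorphism is injective. -/
def IsHopfian (G : Type*) [AddCommGroup G] : Prop :=
  ∀ φ : G →+ G, Function.Surjective φ → Function.Injective φ

/-- co-Bassian group. -/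
def IsCoBassian (G : Type*) [AddCommGroup G] : Prop :=
  ∀ (N : AddSubgroup G) (φ : G →+ G ⧸ N), Function.Injective φ → Function.Surjective φ

/-- generalized co-Bassian group. -/
def IsGenCoBassian (G : Type*) [AddCommGroup G] : Prop :=
  ∀ (N : AddSubgroup G) (φ : G →+ G ⧸ N), Function.Injective φ →
    ∃ S' : AddSubgroup (G ⧸ N), IsCompl φ.range S'

/-- The subgroup `pG` of an abelian group `G`. -/
def smulSub (p : ℕ) (G : Type*) [AddCommGroup G] : AddSubgroup G :=
  (AddMonoidHom.mk' (fun x : G => p • x) (fun a b => smul_add p a b)).range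

theorem hopfian_genCoBassian_iff_coBassian (G : Type*) [AddCommGroup G]
    (hG : IsHopfian G) : IsGenCoBassian G ↔ IsCoBassian G := by
  constructor
  · intro hgen N φ hinj
    obtain ⟨S', hcompl⟩ := hgen N φ hinj
    set P := AddSubgroup.toIntSubmodule φ.range with hP
    set Q := AddSubgroup.toIntSubmodule S' with hQ
    have hc : IsCompl P Q := AddSubgroup.toIntSubmodule.isCompl hcompl
    let pr := Submodule.linearProjOfIsCompl P Q hc
    let e := AddMonoidHom.ofInjective hinj
    let ψ : G →+ G :=
      { toFun := fun x => e.symm ⟨(pr (QuotientAddGroup.mk x) : G ⧸ N), (pr _).2⟩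
        map_zero' := by simp
        map_add' := by
          intro a b
          show e.symm ⟨(pr (QuotientAddGroup.mk (a + b)) : G ⧸ N), (pr _).2⟩ = _
          rw [← map_add e.symm]
          apply congrArg
          apply Subtype.ext
          simp [QuotientAddGroup.mk_add] }
    have hψs : Function.Surjective ψ := by
      intro g
      obtain ⟨x, hx⟩ := QuotientAddGroup.mk_surjective (((e g : φ.range) : G ⧸ N))
      refine ⟨x, ?_⟩
      have h1 : pr (QuotientAddGroup.mk x) = ⟨((e g : φ.range) : G ⧸ N), (e g).2⟩ := by
        rw [hx]
        exact Submodule.linearProjOfIsCompl_apply_left hc ⟨_, (e g).2⟩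
      show e.symm ⟨(pr (QuotientAddGroup.mk x) : G ⧸ N), (pr _).2⟩ = g
      have : (⟨(pr (QuotientAddGroup.mk x) : G ⧸ N), (pr _).2⟩ : φ.range) = e g := by
        ext; rw [h1]
      rw [this, AddEquiv.symm_apply_apply]
    have hψi : Function.Injective ψ := hG ψ hψs
    have hS' : S' = ⊥ := by
      rw [eq_bot_iff]
      intro s hs
      obtain ⟨x, hx⟩ := QuotientAddGroup.mk_surjective s
      have h0 : pr (QuotientAddGroup.mk x) = 0 := by
        rw [hx]
        exact Submodule.linearProjOfIsCompl_apply_right' hc (x := s) hs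
      have : ψ x = ψ 0 := by
        show e.symm ⟨(pr (QuotientAddGroup.mk x) : G ⧸ N), (pr _).2⟩ = ψ 0
        have : (⟨(pr (QuotientAddGroup.mk x) : G ⧸ N), (pr _).2⟩ : φ.range) = 0 := by
          ext; rw [h0]; rfl
        rw [this, map_zero]
        simp [ψ]
        exact (map_zero e.symm).symm
      have hx0 : x = 0 := hψi this
      simp [← hx, hx0]
    rw [hS'] at hcompl
    have : φ.range = ⊤ := by
      have := hcompl.sup_eq_top
      rwa [sup_bot_eq] at this
    intro y
    have : y ∈ φ.range := this ▸ AddSubgroup.mem_top y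
    exact this
  · intro hcb N φ hinj
    refine ⟨⊥, ?_⟩
    have : φ.range = ⊤ := by
      rw [eq_top_iff]
      intro y _
      exact hcb N φ hinj y
    rw [this]
    exact isCompl_top_bot
end

section
/- For every prime p, every positive integer n, and every index set I, the abelian group G = ⊕_{i ∈ I} Z/p^n Z is semi-generalized co-Bassian. -/
/-!
Over the self-injective ring `ZMod k` (for `k ≠ 0`), every free module is injective: by
Baer's criterion over a principal ideal ring it suffices that `m ∈ a • M` whenever the
annihilator of `a` kills `m`, which holds in `ZMod k` by Bézout and then coordinatewise. An injective homomorphism from an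
injective `ZMod k`-module into a quotient `G ⧸ N` (again a `ZMod k`-module) splits, so its
range is a direct summand, in particular essential in itself.
-/

namespace Module

/-- Principal injectivity (P-injectivity): a linear map `R ∙ a → M` is `r * a ↦ r • m` for an
`m` killed by the left annihilator of `a`, and it extends to `R` iff `m ∈ a • M`. -/
def IsPrincipallyInjective (R M : Type*) [Semiring R] [AddCommMonoid M] [Module R M] : Prop :=
  ∀ (a : R) (m : M), (∀ r : R, r * a = 0 → r • m = 0) → ∃ m₀ : M, a • m₀ = m

namespace IsPrincipallyInjective

theorem finsupp {R M : Type*} [Semiring R] [AddCommMonoid M] [Module R M]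
    (h : IsPrincipallyInjective R M) (I : Type*) : IsPrincipallyInjective R (I →₀ M) := by
  intro a m hm
  choose y hy using fun i ↦ h a (m i) fun r hr ↦ by
    simpa only [Finsupp.smul_apply, Finsupp.coe_zero, Pi.zero_apply] using congr($(hm r hr) i)
  refine ⟨∑ i ∈ m.support, Finsupp.single i (y i), ?_⟩
  simp only [Finset.smul_sum, Finsupp.smul_single, hy]
  exact Finsupp.sum_single m

theorem baer {R M : Type*} [Ring R] [IsPrincipalIdealRing R] [AddCommGroup M] [Module R M]
    (h : IsPrincipallyInjective R M) : Baer R M := by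
  intro J g
  obtain ⟨a, rfl⟩ := (IsPrincipalIdealRing.principal J).principal
  have ha : a ∈ Submodule.span R {a} := Submodule.mem_span_singleton_self a
  obtain ⟨m₀, hm₀⟩ := h a (g ⟨a, ha⟩) fun r hr ↦ by
    rw [← map_smul, show r • (⟨a, ha⟩ : Submodule.span R {a}) = 0 from Subtype.ext hr, map_zero]
  refine ⟨LinearMap.toSpanSingleton R M m₀, fun x hx ↦ ?_⟩
  obtain ⟨r, rfl⟩ := Submodule.mem_span_singleton.mp hx
  change (r * a) • m₀ = g (r • ⟨a, ha⟩)
  rw [mul_smul, hm₀, map_smul]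

end IsPrincipallyInjective

end Module

instance (N : ℕ) : IsPrincipalIdealRing (ZMod N) :=
  .of_surjective (Int.castRingHom _) ZMod.intCast_surjective

theorem ZMod.isPrincipallyInjective (N : ℕ) [NeZero N] :
    Module.IsPrincipallyInjective (ZMod N) (ZMod N) := by
  -- With `d = gcd A N = N / e`, `e` kills `a`, hence `m`, so `d ∣ B`; and `d ≡ A * gcdA A N`.
  intro a m h
  obtain ⟨A, rfl⟩ := ZMod.intCast_surjective a
  obtain ⟨B, rfl⟩ := ZMod.intCast_surjective m
  obtain ⟨e, he⟩ : (A.gcd N : ℤ) ∣ N := Int.gcd_dvd_right A N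
  have he0 : e ≠ 0 := by rintro rfl; simp [NeZero.ne N] at he
  have heA : ((e * A : ℤ) : ZMod N) = 0 := by
    obtain ⟨f, hf⟩ : (A.gcd N : ℤ) ∣ A := Int.gcd_dvd_left A N
    rw [ZMod.intCast_zmod_eq_zero_iff_dvd]
    exact ⟨f, by rw [he]; nth_rw 1 [hf]; ring⟩
  have heB := h e (by exact_mod_cast heA)
  obtain ⟨c, rfl⟩ : (A.gcd N : ℤ) ∣ B := by
    rw [smul_eq_mul, ← Int.cast_mul, ZMod.intCast_zmod_eq_zero_iff_dvd, he, mul_comm e] at heB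
    exact Int.dvd_of_mul_dvd_mul_right he0 heB
  refine ⟨((A.gcdA N * c : ℤ) : ZMod N), ?_⟩
  rw [Int.gcd_eq_gcd_ab]
  push_cast
  rw [ZMod.natCast_self]
  ring

theorem AddMonoidHom.exists_isCompl_range_of_leftInverse {G Q : Type*} [AddCommGroup G]
    [AddCommGroup Q] {φ : G →+ Q} {ψ : Q →+ G} (h : Function.LeftInverse ψ φ) :
    ∃ S : AddSubgroup Q, IsCompl φ.range S := by
  let π := φ.toIntLinearMap.rangeRestrict ∘ₗ ψ.toIntLinearMap
  have hπ : ∀ x : LinearMap.range φ.toIntLinearMap, π x = x := by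
    rintro ⟨_, g, rfl⟩
    exact Subtype.ext (congrArg φ (h g))
  exact ⟨_, AddSubgroup.toIntSubmodule.symm.isCompl (LinearMap.isCompl_of_proj hπ)⟩

theorem EssentialInSummand.of_isCompl {G : Type*} [AddCommGroup G] {A S : AddSubgroup G}
    (h : IsCompl A S) : EssentialInSummand A :=
  ⟨A, S, h, le_rfl, fun _ hX hX0 ↦ by rwa [inf_eq_right.mpr hX]⟩

theorem IsGenCoBassian.isSGCB {G : Type*} [AddCommGroup G] (h : IsGenCoBassian G) : IsSGCB G :=
  fun N φ hφ ↦ (h N φ hφ).elim fun _ hS ↦ .of_isCompl hS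

theorem isGenCoBassian_of_injective (k : ℕ) [NeZero k] (G : Type*) [AddCommGroup G]
    [Module (ZMod k) G] [Module.Injective (ZMod k) G] : IsGenCoBassian G := by
  intro N φ hφ
  let _ : Module (ZMod k) (G ⧸ N) := QuotientAddGroup.zmodModule fun x ↦ by
    rw [ZModModule.char_nsmul_eq_zero]; exact zero_mem N
  obtain ⟨ψ, hψ⟩ := Module.Injective.out (φ.toZModLinearMap k) hφ LinearMap.id
  exact φ.exists_isCompl_range_of_leftInverse (ψ := ψ.toAddMonoidHom) hψ

theorem directSum_zmod_pow_isSGCB_general (p n : ℕ) (hp : p.Prime)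
    (I : Type*) : IsSGCB (I →₀ ZMod (p ^ n)) := by
  have : NeZero (p ^ n) := ⟨pow_ne_zero n hp.ne_zero⟩
  have : Module.Injective (ZMod (p ^ n)) (I →₀ ZMod (p ^ n)) :=
    ((ZMod.isPrincipallyInjective _).finsupp I).baer.injective
  exact (isGenCoBassian_of_injective (p ^ n) _).isSGCB

theorem directSum_zmod_pow_isSGCB (p n : ℕ) (hp : p.Prime) (hn : 0 < n)
    (I : Type*) : IsSGCB (I →₀ ZMod (p ^ n)) :=
  directSum_zmod_pow_isSGCB_general p n hp I
end

section
/- The class of semi-generalized co-Bassian abelian groups is closed under taking direct summands: if G = H ⊕ G' is semi-generalized co-Bassian, then H is semi-generalized co-Bassian. -/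
namespace EssentialInSummand

theorem map_addEquiv {A B : Type*} [AddCommGroup A] [AddCommGroup B] (e : A ≃+ B)
    {K : AddSubgroup A} (h : EssentialInSummand K) :
    EssentialInSummand (K.map e.toAddMonoidHom) := by
  obtain ⟨S, S', hcompl, hKS, hess⟩ := h
  let f := e.mapAddSubgroup
  refine ⟨f S, f S', f.isCompl hcompl, f.monotone hKS, fun X hX hX0 hKX => ?_⟩
  refine hess (f.symm X) (f.symm_apply_le.mpr hX) (by simpa using hX0) ?_
  apply f.injective
  rwa [f.map_inf, f.apply_symm_apply, f.map_bot]

theorem of_prod_top {P R : Type*} [AddCommGroup P] [AddCommGroup R] {K : AddSubgroup P}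
    (h : EssentialInSummand (K.prod (⊤ : AddSubgroup R))) : EssentialInSummand K := by
  obtain ⟨S, S', hcompl, hKS, hess⟩ := h
  have mem_S_right : ∀ b : R, ((0 : P), b) ∈ S := fun b =>
    hKS (AddSubgroup.mem_prod.mpr ⟨K.zero_mem, trivial⟩)
  -- `S` contains `0 × R`, so `S = (S ∩ P) × R` and `P = (S ∩ P) ⊕ fst S'`.
  refine ⟨S.comap (AddMonoidHom.inl P R), S'.map (AddMonoidHom.fst P R), ⟨?_, ?_⟩, ?_, ?_⟩
  · rw [AddSubgroup.disjoint_def]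
    rintro _ hxS ⟨⟨x, b⟩, hxbS', rfl⟩
    have hxbS : ((x, b) : P × R) ∈ S := by
      simpa using S.add_mem hxS (mem_S_right b)
    exact congrArg Prod.fst (AddSubgroup.disjoint_def.mp hcompl.disjoint hxbS hxbS')
  · rw [codisjoint_iff_le_sup]
    intro x _
    obtain ⟨⟨a, b⟩, habS, ⟨c, d⟩, hcdS', hsum⟩ :=
      AddSubgroup.mem_sup.mp (hcompl.codisjoint.top_le (AddSubgroup.mem_top (x, (0 : R))))
    have haS : ((a, 0) : P × R) ∈ S := by
      simpa using S.add_mem habS (mem_S_right (-b))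
    have hx : a + c = x := congrArg Prod.fst hsum
    rw [← hx]
    exact AddSubgroup.add_mem_sup haS ⟨(c, d), hcdS', rfl⟩
  · exact fun k hk => hKS (AddSubgroup.mem_prod.mpr ⟨hk, trivial⟩)
  · intro X hX hX0 hKX
    have hinl : Function.Injective (AddMonoidHom.inl P R) := Prod.mk_left_injective 0
    refine hess (X.map (AddMonoidHom.inl P R)) (AddSubgroup.map_le_iff_le_comap.mpr hX)
      ((AddSubgroup.map_eq_bot_iff_of_injective _ hinl).not.mpr hX0) (eq_bot_iff.mpr ?_)
    rintro _ ⟨hK, x, hxX, rfl⟩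
    have hxK : x ∈ K ⊓ X := ⟨(AddSubgroup.mem_prod.mp hK).1, hxX⟩
    rw [hKX, AddSubgroup.mem_bot] at hxK
    simp [hxK]

end EssentialInSummand

theorem IsSGCB.essentialInSummand_range {G Q : Type*} [AddCommGroup G] [AddCommGroup Q]
    (hG : IsSGCB G) {f : G →+ Q} (hf : Function.Surjective f) {g : G →+ Q}
    (hg : Function.Injective g) : EssentialInSummand g.range := by
  let e := QuotientAddGroup.quotientKerEquivOfSurjective f hf
  have h := (hG f.ker (e.symm.toAddMonoidHom.comp g) (e.symm.injective.comp hg)).map_addEquiv e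
  rwa [← AddMonoidHom.range_comp, show e.toAddMonoidHom.comp
    (e.symm.toAddMonoidHom.comp g) = g by ext; simp] at h

theorem isSGCB_of_summand (H G' : Type*) [AddCommGroup H] [AddCommGroup G']
    (h : IsSGCB (H × G')) : IsSGCB H := by
  intro N φ hφ
  have hsurj : Function.Surjective ((QuotientAddGroup.mk' N).prodMap (AddMonoidHom.id G')) :=
    (QuotientAddGroup.mk'_surjective N).prodMap Function.surjective_id
  have hinj : Function.Injective (φ.prodMap (AddMonoidHom.id G')) :=
    hφ.prodMap Function.injective_id
  have hess := h.essentialInSummand_range hsurj hinj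
  rw [AddMonoidHom.range_prodMap,
    (AddMonoidHom.id G').range_eq_top_of_surjective Function.surjective_id] at hess
  exact hess.of_prod_top
end

section
/- Let p be a prime, m > 1 an integer, and let α be either ∞ or an integer with m < α, and let κ be an infinite cardinal. If an abelian group G has a direct summand isomorphic to Z/p^m Z ⊕ (Z_{p^α})^{(κ)} (where Z_{p^∞} denotes the Prüfer p-group), then G is not semi-generalized co-Bassian. -/
-- ==================== auxiliary lemmas ====================

lemma aux_inv_smul {A : Type*} [AddCommGroup A] {p : ℕ} (hp : p.Prime) {z : A}
    (hz : p • z = 0) {t : ℤ} (ht : ¬ (p : ℤ) ∣ t) : ∃ a : ℤ, a • (t • z) = z := by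
  have hcop : IsCoprime (p : ℤ) t := by
    rw [Int.isCoprime_iff_gcd_eq_one]
    have h0 : ¬ p ∣ t.natAbs := by
      intro h
      exact ht ((Int.natCast_dvd_natCast.mpr h).trans (Int.natAbs_dvd.mpr dvd_rfl))
    have := (Nat.Prime.coprime_iff_not_dvd hp).2 h0
    simpa [Int.gcd] using this
  obtain ⟨a, b, hab⟩ := hcop
  refine ⟨b, ?_⟩
  have h1 : (a * (p:ℤ) + b * t) • z = z := by rw [hab, one_smul]
  rw [add_smul, mul_smul, mul_smul] at h1
  have hpz : (p : ℤ) • z = 0 := by simpa using hz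
  rwa [hpz, smul_zero, zero_add] at h1

lemma aux_dvd_of_zsmul {A : Type*} [AddCommGroup A] {p : ℕ} (hp : p.Prime) {g : A}
    (hg0 : g ≠ 0) (hg : p • g = 0) {t : ℤ} (ht : t • g = 0) : (p : ℤ) ∣ t := by
  by_contra h
  obtain ⟨a, ha⟩ := aux_inv_smul hp hg h
  rw [ht, smul_zero] at ha
  exact hg0 ha.symm

lemma aux_shift (κ : Type*) [Infinite κ] :
    ∃ (f : κ → κ) (k₀ : κ), Function.Injective f ∧ ∀ x, f x ≠ k₀ := by
  classical
  let ι := Infinite.natEmbedding κ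
  refine ⟨fun x => if h : ∃ n, ι n = x then ι (h.choose + 1) else x, ι 0, ?_, ?_⟩
  · intro x y hxy
    by_cases hx : ∃ n, ι n = x <;> by_cases hy : ∃ n, ι n = y <;>
      simp only [hx, hy, dif_pos, dif_neg, dite_true, dite_false] at hxy
    · have := ι.injective hxy
      rw [← hx.choose_spec, ← hy.choose_spec, Nat.succ_injective this]
    · exact absurd ⟨_, hxy⟩ hy
    · exact absurd ⟨_, hxy.symm⟩ hx
    · exact hxy
  · intro x
    by_cases hx : ∃ n, ι n = x <;> simp only [hx, dif_pos, dif_neg, dite_true, dite_false]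
    · intro h; exact Nat.succ_ne_zero _ (ι.injective h)
    · intro h; exact hx ⟨0, h.symm⟩

lemma nsmul_natCast_zmod (N a b : ℕ) : b • ((a : ℕ) : ZMod N) = ((b * a : ℕ) : ZMod N) := by
  push_cast [nsmul_eq_mul]; ring

lemma zp_data (p m : ℕ) (hp : p.Prime) (hm : 1 ≤ m) (α : ℕ∞) (hα : (m : ℕ∞) < α) :
    ∃ (g y w : Zp p α) (k' : ℕ),
      p • g = 0 ∧ g ≠ 0 ∧ p ^ (m - 1) • y = g ∧ p ^ m • y = 0 ∧ p ^ (m + k') • w = g := by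
  have hp1 : 1 < p := hp.one_lt
  induction α using WithTop.recTopCoe with
  | top =>
    let Q := ℚ ⧸ AddSubgroup.zmultiples (1 : ℚ)
    have hmk : ∀ j : ℕ, (p : ℕ) ^ j • (((((p:ℚ)^j)⁻¹ : ℚ) : Q)) = 0 := by
      intro j
      have h1 : ((p:ℚ)^j) • (((p:ℚ)^j)⁻¹ : ℚ) = 1 := by
        rw [smul_eq_mul, mul_inv_cancel₀ (by positivity)]
      calc (p:ℕ)^j • ((((p:ℚ)^j)⁻¹ : ℚ) : Q) = ((((p:ℚ)^j • ((p:ℚ)^j)⁻¹ : ℚ)) : Q) := by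
            rw [← QuotientAddGroup.mk_nsmul]
            norm_num
        _ = ((1 : ℚ) : Q) := by rw [h1]
        _ = 0 := (QuotientAddGroup.eq_zero_iff _).2 ⟨1, by simp⟩
    let elt : ℕ → PruferGroup p := fun j => ⟨((((p:ℚ)^j)⁻¹ : ℚ) : Q), ⟨j, hmk j⟩⟩
    have helt : ∀ c j : ℕ, c ≤ j → p ^ c • elt j = elt (j - c) := by
      intro c j hcj
      apply Subtype.ext
      show (p^c : ℕ) • ((((p:ℚ)^j)⁻¹ : ℚ) : Q) = ((((p:ℚ)^(j-c))⁻¹ : ℚ) : Q)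
      have h2 : (p:ℚ)^j = (p:ℚ)^c * (p:ℚ)^(j-c) := by
        rw [← pow_add]; congr 1; omega
      have h3 : ((p:ℚ)^c) • (((p:ℚ)^j)⁻¹ : ℚ) = ((p:ℚ)^(j-c))⁻¹ := by
        rw [smul_eq_mul, h2, mul_inv]
        rw [← mul_assoc, mul_inv_cancel₀ (by positivity), one_mul]
      calc (p^c : ℕ) • ((((p:ℚ)^j)⁻¹ : ℚ) : Q) = ((((p:ℚ)^c • ((p:ℚ)^j)⁻¹ : ℚ)) : Q) := by
            rw [← QuotientAddGroup.mk_nsmul]; norm_num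
        _ = ((((p:ℚ)^(j-c))⁻¹ : ℚ) : Q) := by rw [h3]
    have helt0 : elt 0 = 0 := by
      apply Subtype.ext
      show ((((p:ℚ)^0)⁻¹ : ℚ) : Q) = 0
      rw [pow_zero, inv_one]
      exact (QuotientAddGroup.eq_zero_iff _).2 ⟨1, by simp⟩
    have hg0 : elt 1 ≠ 0 := by
      intro h
      have h2 : ((((p:ℚ)^1)⁻¹ : ℚ) : Q) = 0 := congrArg Subtype.val h
      rw [QuotientAddGroup.eq_zero_iff] at h2
      obtain ⟨t, ht⟩ := h2
      have ht' : (t : ℚ) = ((p:ℚ)^1)⁻¹ := by simpa using ht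
      have h3 : ((t * p : ℤ) : ℚ) = ((1 : ℤ) : ℚ) := by
        push_cast
        rw [ht', pow_one, inv_mul_cancel₀ (by positivity)]
      have h4 : (t * p : ℤ) = 1 := Int.cast_injective h3
      have h5 : (p : ℤ) ∣ 1 := ⟨t, by linarith [h4]⟩
      have := Int.le_of_dvd one_pos h5
      exact absurd (by exact_mod_cast this : p ≤ 1) (by omega)
    refine ⟨elt 1, elt m, elt (m+1), 0, ?_, hg0, ?_, ?_, ?_⟩
    · have := helt 1 1 le_rfl
      simp [helt0] at this; exact this
    · have := helt (m-1) m (by omega)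
      rwa [show m - (m-1) = 1 by omega] at this
    · have := helt m m le_rfl
      simp [helt0] at this; exact this
    · have := helt m (m+1) (by omega)
      rw [show m + 1 - m = 1 by omega] at this
      rw [add_zero]; exact this
  | coe n =>
    have hmn : m < n := by
      have h2 : (m : ℕ∞) < (n : ℕ∞) := hα
      exact_mod_cast h2
    haveI : NeZero (p ^ n) := ⟨pow_ne_zero _ hp.ne_zero⟩
    have key : ∀ a b : ℕ, (b : ℕ) • ((a : ℕ) : ZMod (p^n)) = ((b * a : ℕ) : ZMod (p^n)) :=
      fun a b => nsmul_natCast_zmod _ _ _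
    have hpow : ∀ c d : ℕ, c + d ≥ n → ((p^c * p^d : ℕ) : ZMod (p^n)) = 0 := by
      intro c d hcd
      rw [ZMod.natCast_eq_zero_iff, ← pow_add]
      exact pow_dvd_pow _ hcd
    refine ⟨((p ^ (n-1) : ℕ) : ZMod (p^n)), ((p ^ (n-m) : ℕ) : ZMod (p^n)),
      ((1 : ℕ) : ZMod (p^n)), n - 1 - m, ?_, ?_, ?_, ?_, ?_⟩
    · show p • ((p ^ (n-1) : ℕ) : ZMod (p^n)) = 0
      have h1 : p • ((p ^ (n-1) : ℕ) : ZMod (p^n)) = ((p^1 * p^(n-1) : ℕ) : ZMod (p^n)) := by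
        rw [key]; congr 1; ring
      rw [h1, hpow _ _ (by omega)]
    · show ((p ^ (n-1) : ℕ) : ZMod (p^n)) ≠ 0
      intro h
      rw [ZMod.natCast_eq_zero_iff] at h
      have h2 := Nat.le_of_dvd (pow_pos (by omega) _) h
      have h3 : p ^ (n-1) < p ^ n := Nat.pow_lt_pow_right hp1 (by omega)
      omega
    · show p^(m-1) • ((p ^ (n-m) : ℕ) : ZMod (p^n)) = ((p ^ (n-1) : ℕ) : ZMod (p^n))
      rw [key, ← pow_add, show m - 1 + (n - m) = n - 1 by omega]
    · show p^m • ((p ^ (n-m) : ℕ) : ZMod (p^n)) = 0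
      rw [key, hpow _ _ (by omega)]
    · show p^(m + (n-1-m)) • ((1 : ℕ) : ZMod (p^n)) = ((p ^ (n-1) : ℕ) : ZMod (p^n))
      rw [key, mul_one, show m + (n - 1 - m) = n - 1 by omega]

lemma exists_proj {G : Type*} [AddCommGroup G] {S S' : AddSubgroup G} (h : IsCompl S S') :
    ∃ (π : G →+ ↥S) (π' : G →+ ↥S'),
      (∀ s : ↥S, π (s : G) = s) ∧ (∀ s' : ↥S', π (s' : G) = 0) ∧
      (∀ s : ↥S, π' (s : G) = 0) ∧ (∀ s' : ↥S', π' (s' : G) = s') ∧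
      (∀ x : G, ((π x : G) + (π' x : G) = x)) := by
  have hc : IsCompl (AddSubgroup.toIntSubmodule S) (AddSubgroup.toIntSubmodule S') :=
    AddSubgroup.toIntSubmodule.isCompl h
  let Sm := AddSubgroup.toIntSubmodule S
  let S'm := AddSubgroup.toIntSubmodule S'
  let eS : ↥Sm ≃+ ↥S :=
    { toFun := fun x => ⟨x.1, x.2⟩
      invFun := fun x => ⟨x.1, x.2⟩
      left_inv := fun x => rfl
      right_inv := fun x => rfl
      map_add' := fun x y => rfl }
  let eS' : ↥S'm ≃+ ↥S' :=
    { toFun := fun x => ⟨x.1, x.2⟩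
      invFun := fun x => ⟨x.1, x.2⟩
      left_inv := fun x => rfl
      right_inv := fun x => rfl
      map_add' := fun x y => rfl }
  let P := Sm.linearProjOfIsCompl S'm hc
  let P' := S'm.linearProjOfIsCompl Sm hc.symm
  refine ⟨eS.toAddMonoidHom.comp P.toAddMonoidHom, eS'.toAddMonoidHom.comp P'.toAddMonoidHom,
    ?_, ?_, ?_, ?_, ?_⟩
  · intro s
    apply Subtype.ext
    have h1 : P ((s : G)) = ⟨s.1, s.2⟩ := Submodule.linearProjOfIsCompl_apply_left hc ⟨s.1, s.2⟩
    show ((P ((s : G)) : G)) = (s : G)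
    rw [h1]
  · intro s'
    apply Subtype.ext
    have h1 : P ((s' : G)) = 0 := Submodule.linearProjOfIsCompl_apply_right hc ⟨s'.1, s'.2⟩
    show ((P ((s' : G)) : G)) = ((0 : ↥S) : G)
    rw [h1]
    rfl
  · intro s
    apply Subtype.ext
    have h1 : P' ((s : G)) = 0 := Submodule.linearProjOfIsCompl_apply_right hc.symm ⟨s.1, s.2⟩
    show ((P' ((s : G)) : G)) = ((0 : ↥S') : G)
    rw [h1]
    rfl
  · intro s'
    apply Subtype.ext
    have h1 : P' ((s' : G)) = ⟨s'.1, s'.2⟩ :=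
      Submodule.linearProjOfIsCompl_apply_left hc.symm ⟨s'.1, s'.2⟩
    show ((P' ((s' : G)) : G)) = (s' : G)
    rw [h1]
  · intro x
    show ((P x : G)) + ((P' x : G)) = x
    exact Submodule.projection_add_projection_eq_self hc x

theorem not_isSGCB_of_summand_cyclic_prod (G : Type*) [AddCommGroup G]
    (p m : ℕ) (hp : p.Prime) (hm : 1 < m) (α : ℕ∞) (hα : (m : ℕ∞) < α)
    (κ : Type*) [Infinite κ]
    (h : ∃ S S' : AddSubgroup G, IsCompl S S' ∧
      Nonempty (↥S ≃+ ZMod (p ^ m) × (κ →₀ Zp p α))) :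
    ¬ IsSGCB G := by
  intro hSG
  obtain ⟨S, S', hSS', ⟨ψ⟩⟩ := h
  have hm1 : 1 ≤ m := le_of_lt hm
  obtain ⟨g, y, w, k', hgp, hg0, hy1, hy2, hw⟩ := zp_data p m hp hm1 α hα
  obtain ⟨σ, k₀, hσinj, hσne⟩ := aux_shift κ
  obtain ⟨πS, πS', hp1, hp2, hp3, hp4, hp5⟩ := exists_proj hSS'
  haveI : NeZero (p ^ m) := ⟨pow_ne_zero _ hp.ne_zero⟩
  haveI : NeZero (p ^ (m-1)) := ⟨pow_ne_zero _ hp.ne_zero⟩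
  -- the model group W
  set F := (κ →₀ Zp p α) with hF
  set M := ZMod (p ^ m) × F with hM
  set W := M × ↥S' with hW
  -- the equivalence W ≃ G, implemented as a pair of homs
  let Φ : W →+ G :=
    (S.subtype.comp ψ.symm.toAddMonoidHom).comp (AddMonoidHom.fst M ↥S') +
      S'.subtype.comp (AddMonoidHom.snd M ↥S')
  let Φi : G →+ W := (ψ.toAddMonoidHom.comp πS).prod πS'
  have hΦ : ∀ z : W, Φ z = ((ψ.symm z.1 : ↥S) : G) + ((z.2 : ↥S') : G) := fun z => rfl
  have hΦi : ∀ x : G, Φi x = (ψ (πS x), πS' x) := fun x => rfl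
  have hΦiΦ : ∀ z : W, Φi (Φ z) = z := by
    rintro ⟨a, b⟩
    rw [hΦ, hΦi]
    simp only [map_add, hp1, hp2, hp3, hp4, add_zero, zero_add]
    rw [AddEquiv.apply_symm_apply]
  have hΦΦi : ∀ x : G, Φ (Φi x) = x := by
    intro x
    rw [hΦi, hΦ]
    simp only
    rw [AddEquiv.symm_apply_apply]
    exact hp5 x
  have hΦinj : Function.Injective Φ := by
    intro a b hab
    have := congrArg Φi hab
    rwa [hΦiΦ, hΦiΦ] at this
  -- the shift on finsupps
  let sh : F →+ F := Finsupp.mapDomain.addMonoidHom σ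
  have hsh : ∀ b : F, sh b = Finsupp.mapDomain σ b := fun b => rfl
  -- hom `θ : ZMod (p^m) →+ Zp p α` sending `1 ↦ y`
  have hyℤ : ((zmultiplesHom (Zp p α)) y) ((p^m : ℕ) : ℤ) = 0 := by
    rw [zmultiplesHom_apply, natCast_zsmul, hy2]
  let θ : ZMod (p^m) →+ Zp p α := (ZMod.lift (p^m)) ⟨(zmultiplesHom (Zp p α)) y, hyℤ⟩
  have hθ : ∀ c : ℕ, θ ((c : ℕ) : ZMod (p^m)) = c • y := by
    intro c
    have h1 := ZMod.lift_coe (p^m) ⟨(zmultiplesHom (Zp p α)) y, hyℤ⟩ (c : ℤ)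
    rw [zmultiplesHom_apply, natCast_zsmul] at h1
    rw [← h1]
    congr 1
    push_cast
    rfl
  -- the two test homomorphisms on W
  let πF : W →+ ZMod (p^(m-1)) :=
    (ZMod.castHom (pow_dvd_pow p (Nat.sub_le m 1)) (ZMod (p^(m-1)))).toAddMonoidHom.comp
      ((AddMonoidHom.fst _ _).comp (AddMonoidHom.fst M ↥S'))
  let πX : W →+ Zp p α :=
    (θ.comp ((AddMonoidHom.fst _ _).comp (AddMonoidHom.fst M ↥S'))) +
      ((Finsupp.applyAddHom k₀).comp ((AddMonoidHom.snd _ _).comp (AddMonoidHom.fst M ↥S')))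
  have hπF : ∀ z : W, πF z = ZMod.castHom (pow_dvd_pow p (Nat.sub_le m 1)) (ZMod (p^(m-1))) z.1.1 :=
    fun z => rfl
  have hπX : ∀ z : W, πX z = θ z.1.1 + z.1.2 k₀ := fun z => rfl
  -- the element generating N
  let νW : W := ((((p^(m-1) : ℕ) : ZMod (p^m)), -(Finsupp.single k₀ g)), 0)
  let ν : G := Φ νW
  set N := AddSubgroup.zmultiples ν with hN
  -- the injection φ
  let Ψ : W →+ W := ((AddMonoidHom.id (ZMod (p^m))).prodMap sh).prodMap (AddMonoidHom.id ↥S')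
  have hΨ : ∀ z : W, Ψ z = ((z.1.1, sh z.1.2), z.2) := fun z => rfl
  let φ : G →+ G ⧸ N := (QuotientAddGroup.mk' N).comp (Φ.comp (Ψ.comp Φi))
  have hφ : ∀ x : G, φ x = QuotientAddGroup.mk (Φ (Ψ (Φi x))) := fun x => rfl
  -- basic facts about νW and the test homs
  have hπFν : πF νW = 0 := by
    rw [hπF]
    show (ZMod.castHom _ (ZMod (p^(m-1)))) ((p^(m-1) : ℕ) : ZMod (p^m)) = 0
    rw [map_natCast, ZMod.natCast_self]
  have hπXν : πX νW = 0 := by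
    rw [hπX]
    show θ ((p^(m-1) : ℕ) : ZMod (p^m)) + (-(Finsupp.single k₀ g)) k₀ = 0
    rw [hθ, hy1, Finsupp.neg_apply, Finsupp.single_eq_same, add_neg_cancel]
  -- equality of classes in the quotient
  have hmkeq : ∀ z z' : W, (∃ t : ℤ, z - z' = t • νW) →
      (QuotientAddGroup.mk (Φ z) : G ⧸ N) = QuotientAddGroup.mk (Φ z') := by
    rintro z z' ⟨t, ht⟩
    rw [QuotientAddGroup.eq_iff_sub_mem, ← map_sub, ht, map_zsmul]
    exact AddSubgroup.zsmul_mem _ (AddSubgroup.mem_zmultiples ν) t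
  -- injectivity of φ
  have hφinj : Function.Injective φ := by
    rw [injective_iff_map_eq_zero]
    intro x hx
    rw [hφ, QuotientAddGroup.eq_zero_iff, hN, AddSubgroup.mem_zmultiples_iff] at hx
    obtain ⟨t, ht⟩ := hx
    have ht' : Ψ (Φi x) = t • νW := by
      apply hΦinj
      rw [← ht, map_zsmul]
    set z := Φi x with hz
    rw [hΨ] at ht'
    have ha : z.1.1 = t • ((p^(m-1) : ℕ) : ZMod (p^m)) := by
      have h0 := congrArg (⇑((AddMonoidHom.fst (ZMod (p^m)) F).comp (AddMonoidHom.fst M ↥S'))) ht'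
      rw [map_zsmul] at h0
      exact h0
    have hb : sh z.1.2 = t • (-(Finsupp.single k₀ g)) := by
      have h0 := congrArg (⇑((AddMonoidHom.snd (ZMod (p^m)) F).comp (AddMonoidHom.fst M ↥S'))) ht'
      rw [map_zsmul] at h0
      exact h0
    have hc : z.2 = 0 := by
      have h0 := congrArg (⇑(AddMonoidHom.snd M ↥S')) ht'
      rw [map_zsmul] at h0
      have h1 : t • ((AddMonoidHom.snd M ↥S') νW) = 0 := smul_zero t
      rw [h1] at h0
      exact h0
    have hb' : sh z.1.2 = Finsupp.single k₀ (-(t • g)) := by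
      rw [hb, smul_neg, Finsupp.smul_single, ← Finsupp.single_neg]
    have hbz : z.1.2 = 0 := by
      ext j
      have := congrFun (congrArg (fun f : F => (f : κ → Zp p α)) hb') (σ j)
      rw [hsh] at this
      rw [Finsupp.mapDomain_apply hσinj] at this
      rw [this, Finsupp.single_eq_of_ne (hσne j)]
      rfl
    have htg : t • g = 0 := by
      rw [hbz, map_zero] at hb'
      have h0 : -(t • g) = 0 := Finsupp.single_eq_zero.mp hb'.symm
      exact neg_eq_zero.mp h0
    have hpt : (p : ℤ) ∣ t := aux_dvd_of_zsmul hp hg0 hgp htg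
    obtain ⟨t', rfl⟩ := hpt
    have haz : z.1.1 = 0 := by
      rw [ha, mul_comm, mul_smul, natCast_zsmul, nsmul_natCast_zmod, ← pow_succ',
        show (m - 1) + 1 = m by omega, ZMod.natCast_self, smul_zero]
    have hzz : z = 0 := by
      have : z = ((z.1.1, z.1.2), z.2) := rfl
      rw [this, haz, hbz, hc]
      rfl
    have := congrArg Φ hzz
    rwa [hz, hΦΦi, map_zero] at this
  -- the two descended homomorphisms
  have hkerF : N ≤ (πF.comp Φi).ker := by
    intro x hx
    rw [hN, AddSubgroup.mem_zmultiples_iff] at hx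
    obtain ⟨t, rfl⟩ := hx
    have h1 : Φi (t • ν) = t • νW := by rw [map_zsmul]; congr 1; exact hΦiΦ νW
    simp only [AddMonoidHom.mem_ker, AddMonoidHom.coe_comp, Function.comp_apply]
    rw [h1, map_zsmul, hπFν, smul_zero]
  have hkerX : N ≤ (πX.comp Φi).ker := by
    intro x hx
    rw [hN, AddSubgroup.mem_zmultiples_iff] at hx
    obtain ⟨t, rfl⟩ := hx
    have h1 : Φi (t • ν) = t • νW := by rw [map_zsmul]; congr 1; exact hΦiΦ νW
    simp only [AddMonoidHom.mem_ker, AddMonoidHom.coe_comp, Function.comp_apply]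
    rw [h1, map_zsmul, hπXν, smul_zero]
  let πFH : G ⧸ N →+ ZMod (p^(m-1)) := QuotientAddGroup.lift N (πF.comp Φi) hkerF
  let πXH : G ⧸ N →+ Zp p α := QuotientAddGroup.lift N (πX.comp Φi) hkerX
  have hπFH : ∀ z : W, πFH (QuotientAddGroup.mk (Φ z)) = πF z := by
    intro z
    show (QuotientAddGroup.lift N (πF.comp Φi) hkerF) (QuotientAddGroup.mk (Φ z)) = πF z
    rw [QuotientAddGroup.lift_mk]
    simp only [AddMonoidHom.coe_comp, Function.comp_apply]
    rw [hΦiΦ]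
  have hπXH : ∀ z : W, πXH (QuotientAddGroup.mk (Φ z)) = πX z := by
    intro z
    show (QuotientAddGroup.lift N (πX.comp Φi) hkerX) (QuotientAddGroup.mk (Φ z)) = πX z
    rw [QuotientAddGroup.lift_mk]
    simp only [AddMonoidHom.coe_comp, Function.comp_apply]
    rw [hΦiΦ]
  -- special elements
  let e₁ : W := ((1, 0), 0)
  let wk : W := ((0, Finsupp.single k₀ w), 0)
  let gb : W := ((0, Finsupp.single k₀ g), 0)
  let ebar : G ⧸ N := QuotientAddGroup.mk (Φ e₁)
  let wbar : G ⧸ N := QuotientAddGroup.mk (Φ wk)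
  set τ : G ⧸ N := QuotientAddGroup.mk (Φ gb) with hτ
  -- ebar is in the range of φ
  have hememb : ebar ∈ φ.range := by
    refine ⟨Φ e₁, ?_⟩
    rw [hφ, hΦiΦ]
    have : Ψ e₁ = e₁ := by
      rw [hΨ]
      show (((1 : ZMod (p^m)), sh 0), (0 : ↥S')) = e₁
      rw [map_zero]
    rw [this]
  -- τ = p^(m-1) • ebar
  have hsm1 : p^(m-1) • ebar = τ := by
    show p^(m-1) • (QuotientAddGroup.mk (Φ e₁) : G ⧸ N) = τ
    rw [← QuotientAddGroup.mk_nsmul, ← map_nsmul]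
    have h1 : p^(m-1) • e₁ = (((((p^(m-1) : ℕ) : ZMod (p^m))), 0), 0) := by
      show ((p^(m-1) • (1 : ZMod (p^m)), p^(m-1) • (0:F)), p^(m-1) • (0 : ↥S')) = _
      rw [smul_zero, smul_zero]
      have : p^(m-1) • (1 : ZMod (p^m)) = ((p^(m-1) : ℕ) : ZMod (p^m)) := by
        have := nsmul_natCast_zmod (p^m) 1 (p^(m-1))
        rwa [Nat.cast_one, mul_one] at this
      rw [this]
    rw [h1, hτ]
    apply hmkeq
    refine ⟨1, ?_⟩
    rw [one_smul]
    show ((((p^(m-1) : ℕ) : ZMod (p^m)) - 0, 0 - Finsupp.single k₀ g), (0:↥S') - 0) = νW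
    rw [sub_zero, zero_sub, sub_zero]
  -- τ = p^(m+k') • wbar
  have hsm2 : p^(m+k') • wbar = τ := by
    show p^(m+k') • (QuotientAddGroup.mk (Φ wk) : G ⧸ N) = τ
    rw [← QuotientAddGroup.mk_nsmul, ← map_nsmul]
    have h1 : p^(m+k') • wk = gb := by
      show ((p^(m+k') • (0 : ZMod (p^m)), p^(m+k') • Finsupp.single k₀ w), p^(m+k') • (0 : ↥S')) = gb
      rw [smul_zero, smul_zero, Finsupp.smul_single, hw]
    rw [h1]
  -- range values of the test homs
  have hrangeval : ∀ r ∈ φ.range, ∃ a : ZMod (p^m),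
      πFH r = ZMod.castHom (pow_dvd_pow p (Nat.sub_le m 1)) (ZMod (p^(m-1))) a ∧ πXH r = θ a := by
    rintro r ⟨x, rfl⟩
    rw [hφ]
    refine ⟨(Φi x).1.1, ?_, ?_⟩
    · rw [hπFH, hπF, hΨ]
    · rw [hπXH, hπX, hΨ]
      simp only
      rw [hsh, Finsupp.mapDomain_notin_range _ _ (by
        rintro ⟨j, hj⟩
        exact hσne j hj), add_zero]
  -- value of πXH on τ
  have hπXτ : πXH τ = g := by
    rw [hτ, hπXH, hπX]
    show θ 0 + (Finsupp.single k₀ g) k₀ = g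
    rw [map_zero, zero_add, Finsupp.single_eq_same]
  -- now apply the SGCB hypothesis
  obtain ⟨S₁, S₁', hc₁, hle₁, hess₁⟩ := hSG N φ hφinj
  obtain ⟨π₁, π₁', hq1, hq2, hq3, hq4, hq5⟩ := exists_proj hc₁
  have hebar₁ : ebar ∈ S₁ := hle₁ hememb
  have hτ₁ : τ ∈ S₁ := by
    rw [← hsm1]
    exact AddSubgroup.nsmul_mem S₁ hebar₁ _
  let u : ↥S₁ := π₁ wbar
  have hu : p^(m+k') • u = ⟨τ, hτ₁⟩ := by
    have h1 : p^(m+k') • u = π₁ (p^(m+k') • wbar) := by rw [map_nsmul]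
    rw [h1, hsm2]
    exact hq1 ⟨τ, hτ₁⟩
  let v : ↥S₁ := p^(k'+1) • u - ⟨ebar, hebar₁⟩
  have hv : p^(m-1) • v = 0 := by
    show p^(m-1) • (p^(k'+1) • u - ⟨ebar, hebar₁⟩) = 0
    rw [smul_sub, smul_smul, ← pow_add, show (m-1) + (k'+1) = m + k' by omega, hu]
    apply Subtype.ext
    show τ - p^(m-1) • ebar = 0
    rw [hsm1, sub_self]
  -- find j with p^j • v in the range
  have hclaim : ∃ j ≤ m - 2, ((p^j • v : ↥S₁) : G ⧸ N) ∈ φ.range := by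
    by_cases hv0 : v = 0
    · refine ⟨0, Nat.zero_le _, ?_⟩
      rw [pow_zero, one_smul, hv0]
      exact AddSubgroup.zero_mem _
    · have hex : ∃ i, p^(i+1) • v = 0 := ⟨m-2, by rw [show (m-2)+1 = m-1 by omega]; exact hv⟩
      classical
      let j := Nat.find hex
      have hj1 : p^(j+1) • v = 0 := Nat.find_spec hex
      have hjle : j ≤ m - 2 := Nat.find_le (by rw [show (m-2)+1 = m-1 by omega]; exact hv)
      have hjnz : p^j • v ≠ 0 := by
        rcases Nat.eq_zero_or_pos j with hj0 | hjpos
        · rw [hj0, pow_zero, one_smul]; exact hv0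
        · intro hh
          exact Nat.find_min hex (show j - 1 < j by omega)
            (show p^(j-1+1) • v = 0 by rw [show j - 1 + 1 = j by omega]; exact hh)
      refine ⟨j, hjle, ?_⟩
      set z : ↥S₁ := p^j • v with hzdef
      have hzp : p • (z : G ⧸ N) = 0 := by
        have h1 : p • z = p^(j+1) • v := by
          rw [hzdef, smul_smul, ← pow_succ']
        have : ((p • z : ↥S₁) : G ⧸ N) = ((0 : ↥S₁) : G ⧸ N) := by rw [h1, hj1]
        simpa using this
      have hzne : (z : G ⧸ N) ≠ 0 := by
        intro h0
        exact hjnz (Subtype.ext h0)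
      let X := AddSubgroup.zmultiples ((z : G ⧸ N))
      have hXle : X ≤ S₁ := by
        intro x hx
        rw [AddSubgroup.mem_zmultiples_iff] at hx
        obtain ⟨t, rfl⟩ := hx
        exact AddSubgroup.zsmul_mem S₁ z.2 t
      have hXbot : X ≠ ⊥ := by
        intro h0
        have : (z : G ⧸ N) ∈ X := AddSubgroup.mem_zmultiples _
        rw [h0, AddSubgroup.mem_bot] at this
        exact hzne this
      have hne := hess₁ X hXle hXbot
      have : ∃ x, x ∈ φ.range ⊓ X ∧ x ≠ 0 := by
        by_contra hcon
        push_neg at hcon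
        exact hne ((AddSubgroup.eq_bot_iff_forall _).2 hcon)
      obtain ⟨x, hx, hxne⟩ := this
      rw [AddSubgroup.mem_inf] at hx
      obtain ⟨hxr, hxX⟩ := hx
      rw [AddSubgroup.mem_zmultiples_iff] at hxX
      obtain ⟨t, rfl⟩ := hxX
      have hpt : ¬ (p : ℤ) ∣ t := by
        rintro ⟨s, rfl⟩
        rw [mul_comm, mul_smul, natCast_zsmul, hzp, smul_zero] at hxne
        exact hxne rfl
      obtain ⟨a, ha⟩ := aux_inv_smul hp hzp hpt
      rw [← ha]
      exact AddSubgroup.zsmul_mem _ hxr a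
  obtain ⟨j, hjle, hjmem⟩ := hclaim
  -- build r
  have hvcoe : ((p^j • v : ↥S₁) : G ⧸ N) = p^(k'+1+j) • ((u : G ⧸ N)) - p^j • ebar := by
    show p^j • ((v : ↥S₁) : G ⧸ N) = _
    have h1 : ((v : ↥S₁) : G ⧸ N) = p^(k'+1) • ((u : G ⧸ N)) - ebar := rfl
    rw [h1, smul_sub, smul_smul, ← pow_add, show j + (k'+1) = k'+1+j by omega]
  have hq_mem : p^(k'+1+j) • ((u : G ⧸ N)) ∈ φ.range := by
    have h1 : p^(k'+1+j) • ((u : G ⧸ N)) = ((p^j • v : ↥S₁) : G ⧸ N) + p^j • ebar := by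
      rw [hvcoe]; abel
    rw [h1]
    exact AddSubgroup.add_mem _ hjmem (AddSubgroup.nsmul_mem _ hememb _)
  set r : G ⧸ N := p^(m+k'-1) • ((u : G ⧸ N)) with hrdef
  have hrmem : r ∈ φ.range := by
    have h1 : r = p^(m-2-j) • (p^(k'+1+j) • ((u : G ⧸ N))) := by
      rw [hrdef, smul_smul, ← pow_add, show (m-2-j) + (k'+1+j) = m+k'-1 by omega]
    rw [h1]
    exact AddSubgroup.nsmul_mem _ hq_mem _
  have hpr : p • r = τ := by
    rw [hrdef, smul_smul, ← pow_succ', show (m+k'-1)+1 = m+k' by omega]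
    have : p^(m+k') • ((u : G ⧸ N)) = ((p^(m+k') • u : ↥S₁) : G ⧸ N) := rfl
    rw [this, hu]
  -- extract the contradiction
  obtain ⟨a, hfa, hxa⟩ := hrangeval r hrmem
  -- fact 1 : castHom a = 0
  have hcast0 : ZMod.castHom (pow_dvd_pow p (Nat.sub_le m 1)) (ZMod (p^(m-1))) a = 0 := by
    rw [← hfa, hrdef, map_nsmul]
    have h1 : (p^(m-1) : ℕ) ∣ p^(m+k'-1) := pow_dvd_pow p (by omega)
    obtain ⟨d, hd⟩ := h1
    rw [hd, mul_comm, ← smul_smul]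
    have h2 : p^(m-1) • (πFH ((u : G ⧸ N))) = 0 := by
      rw [nsmul_eq_mul, ZMod.natCast_self, zero_mul]
    rw [h2, smul_zero]
  -- fact 2 : p • θ a = g
  have hθag : p • θ a = g := by
    rw [← hxa, ← map_nsmul, hpr, hπXτ]
  -- translate via a.val
  have haval : ((a.val : ℕ) : ZMod (p^m)) = a := ZMod.natCast_rightInverse a
  have hθaval : θ a = a.val • y := by
    have h0 := hθ a.val
    rwa [haval] at h0
  have hsmul : (p * a.val) • y = p ^ (m-1) • y := by
    rw [← smul_smul, ← hθaval, hθag, ← hy1]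
  have horder : addOrderOf y = p ^ m := by
    have h1 : addOrderOf y ∣ p ^ m := addOrderOf_dvd_iff_nsmul_eq_zero.2 hy2
    obtain ⟨i, hile, hieq⟩ := (Nat.dvd_prime_pow hp).1 h1
    by_contra hne
    have him : i < m := lt_of_le_of_ne hile (fun hh => hne (by rw [hieq, hh]))
    have h2 : addOrderOf y ∣ p ^ (m-1) := hieq ▸ pow_dvd_pow p (by omega)
    have h3 : p ^ (m-1) • y = 0 := addOrderOf_dvd_iff_nsmul_eq_zero.1 h2
    rw [hy1] at h3
    exact hg0 h3
  have hdvd1 : ((p^m : ℕ) : ℤ) ∣ ((p * a.val : ℕ) : ℤ) - ((p^(m-1) : ℕ) : ℤ) := by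
    have hz0 : (((p * a.val : ℕ) : ℤ) - ((p^(m-1) : ℕ) : ℤ)) • y = 0 := by
      rw [sub_smul, natCast_zsmul, natCast_zsmul, hsmul, sub_self]
    have h0 := addOrderOf_dvd_iff_zsmul_eq_zero.2 hz0
    rwa [horder] at h0
  have hdvd2 : (p^(m-1) : ℕ) ∣ a.val := by
    have h0 := hcast0
    rw [← haval, map_natCast] at h0
    rwa [ZMod.natCast_eq_zero_iff] at h0
  obtain ⟨d, hd⟩ := hdvd2
  have hdvd3 : ((p^m : ℕ) : ℤ) ∣ ((p * a.val : ℕ) : ℤ) := by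
    have h0 : (p^m : ℕ) ∣ (p * a.val) :=
      ⟨d, by rw [hd, ← mul_assoc, ← pow_succ', show (m-1)+1 = m by omega]⟩
    exact_mod_cast Int.natCast_dvd_natCast.2 h0
  have hfin : ((p^m : ℕ) : ℤ) ∣ ((p^(m-1) : ℕ) : ℤ) := by
    have h0 := dvd_sub hdvd3 hdvd1
    simpa using h0
  rw [Int.natCast_dvd_natCast] at hfin
  have h1 := Nat.le_of_dvd (pow_pos (by have := hp.one_lt; omega) _) hfin
  have h2 : p ^ (m-1) < p ^ m := Nat.pow_lt_pow_right hp.one_lt (by omega)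
  omega
end

section
/- A free abelian group G is semi-generalized co-Bassian if and only if G has finite rank. -/
lemma exists_ne_zero_of_ne_bot {G : Type*} [AddCommGroup G] {X : AddSubgroup G} (h : X ≠ ⊥) :
    ∃ x ∈ X, x ≠ 0 := by
  by_contra hc
  push_neg at hc
  exact h (AddSubgroup.eq_bot_iff_forall X |>.mpr hc)

lemma isCompl_map_addEquiv {G H : Type*} [AddCommGroup G] [AddCommGroup H] (e : G ≃+ H)
    {S S' : AddSubgroup G} (h : IsCompl S S') :
    IsCompl (S.map e.toAddMonoidHom) (S'.map e.toAddMonoidHom) := by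
  constructor
  · rw [disjoint_iff, AddSubgroup.eq_bot_iff_forall]
    rintro x ⟨⟨s, hs, rfl⟩, ⟨s', hs', he⟩⟩
    have : s' = s := e.injective he
    subst this
    have : s' ∈ S ⊓ S' := ⟨hs, hs'⟩
    rw [h.inf_eq_bot] at this
    simp only [AddSubgroup.mem_bot] at this
    simp [this]
  · rw [codisjoint_iff, eq_top_iff]
    intro y _
    obtain ⟨s, hs, s', hs', hss⟩ := AddSubgroup.mem_sup.mp
      (show e.symm y ∈ S ⊔ S' by rw [h.sup_eq_top]; trivial)
    refine AddSubgroup.mem_sup.mpr ⟨e s, ⟨s, hs, rfl⟩, e s', ⟨s', hs', rfl⟩, ?_⟩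
    rw [← map_add, hss]
    simp

lemma not_linearIndependent_option {H ι : Type u} [AddCommGroup H] [Fintype ι]
    (hrank : Module.rank ℤ H ≤ (Fintype.card ι : Cardinal)) (v : Option ι → H) :
    ¬ LinearIndependent ℤ v := by
  intro h
  have h1 : (Cardinal.mk (Option ι)) ≤ (Fintype.card ι : Cardinal) :=
    h.cardinal_le_rank.trans hrank
  rw [Cardinal.mk_option, Cardinal.mk_fintype] at h1
  norm_cast at h1
  omega

theorem free_isSGCB_iff_finiteRank (G : Type*) [AddCommGroup G]
    [Module.Free ℤ G] : IsSGCB G ↔ Module.Finite ℤ G := by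
  constructor
  · intro hsgcb
    by_contra hnotfin
    classical
    set ι := Module.Free.ChooseBasisIndex ℤ G with hι
    set bG := Module.Free.chooseBasis ℤ G with hbG
    haveI : Infinite ι := by
      by_contra h
      rw [not_infinite_iff_finite] at h
      exact hnotfin (Module.Finite.of_basis bG)
    set F := (ι →₀ ℤ) with hF
    set M := (ZMod 2 × F) with hM
    -- an equivalence `Option ι ≃ ι`
    have hcard : Cardinal.mk (Option ι) = Cardinal.mk ι := by
      rw [Cardinal.mk_option]
      exact Cardinal.add_one_eq (Cardinal.aleph0_le_mk ι)
    obtain ⟨e0⟩ := Cardinal.eq.mp hcard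
    set j : ι → ι := fun i => e0 (some i) with hj'
    have hj : Function.Injective j := fun a b h => Option.some_injective ι (e0.injective h)
    set i0 : ι := e0 none with hi0'
    have hi0 : ∀ i, j i ≠ i0 := by
      intro i h
      exact Option.some_ne_none i (e0.injective h)
    set e1 : G ≃+ F := bG.repr.toAddEquiv with he1
    -- the surjection ψ : G → M
    set ψ : G →+ M := AddMonoidHom.mk'
        (fun x => (((e1 x i0 : ℤ) : ZMod 2), Finsupp.comapDomain j (e1 x) hj.injOn))
        (by
          intro a b
          refine Prod.ext ?_ ?_
          · show (((e1 (a + b)) i0 : ℤ) : ZMod 2)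
                = (((e1 a) i0 : ℤ) : ZMod 2) + (((e1 b) i0 : ℤ) : ZMod 2)
            rw [map_add, Finsupp.add_apply]
            push_cast
            ring
          · show Finsupp.comapDomain j (e1 (a + b)) hj.injOn
                = Finsupp.comapDomain j (e1 a) hj.injOn + Finsupp.comapDomain j (e1 b) hj.injOn
            ext i
            rw [Finsupp.comapDomain_apply, Finsupp.add_apply, Finsupp.comapDomain_apply,
              Finsupp.comapDomain_apply, map_add]
            exact Finsupp.add_apply _ _ _) with hψ'
    have hψ : Function.Surjective ψ := by
      rintro ⟨c, g⟩
      obtain ⟨z, hz⟩ := ZMod.intCast_surjective c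
      set f : F := Finsupp.embDomain ⟨j, hj⟩ g + Finsupp.single i0 z with hf
      refine ⟨e1.symm f, ?_⟩
      have hfe : e1 (e1.symm f) = f := e1.apply_symm_apply f
      show ((((e1 (e1.symm f)) i0 : ℤ) : ZMod 2), Finsupp.comapDomain j (e1 (e1.symm f)) hj.injOn)
          = (c, g)
      rw [hfe]
      refine Prod.ext ?_ ?_
      · show ((f i0 : ℤ) : ZMod 2) = c
        rw [hf, Finsupp.add_apply, Finsupp.single_eq_same, Finsupp.embDomain_notin_range]
        · simpa using hz
        · rintro ⟨i, hi⟩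
          exact hi0 i hi
      · show Finsupp.comapDomain j f hj.injOn = g
        ext a
        rw [Finsupp.comapDomain_apply, hf, Finsupp.add_apply,
          Finsupp.single_eq_of_ne' (fun h => hi0 a h.symm), add_zero]
        exact Finsupp.embDomain_apply_self ⟨j, hj⟩ g a
    -- the injective map φM : G → M
    set φM : G →+ M := AddMonoidHom.mk'
        (fun x => ((((e1 x) i0 : ℤ) : ZMod 2), (2 : ℤ) • e1 x))
        (by
          intro a b
          refine Prod.ext ?_ ?_
          · show (((e1 (a + b)) i0 : ℤ) : ZMod 2)
                = (((e1 a) i0 : ℤ) : ZMod 2) + (((e1 b) i0 : ℤ) : ZMod 2)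
            rw [map_add, Finsupp.add_apply]
            push_cast
            ring
          · show (2 : ℤ) • e1 (a + b) = (2 : ℤ) • e1 a + (2 : ℤ) • e1 b
            rw [map_add, smul_add]) with hφM'
    have hφM : Function.Injective φM := by
      rw [injective_iff_map_eq_zero]
      intro x hx
      have h2 : (2 : ℤ) • e1 x = 0 := congrArg Prod.snd hx
      rcases smul_eq_zero.mp h2 with h | h
      · norm_num at h
      · have := congrArg e1.symm h
        simpa using this
    set N := ψ.ker with hN
    set eQ : (G ⧸ N) ≃+ M := QuotientAddGroup.quotientKerEquivOfSurjective ψ hψ with heQ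
    set φ : G →+ G ⧸ N := eQ.symm.toAddMonoidHom.comp φM with hφ'
    have hφinj : Function.Injective φ := fun a b h => hφM (eQ.symm.injective h)
    obtain ⟨S, S', hcompl, hle, hess⟩ := hsgcb N φ hφinj
    set T := S.map eQ.toAddMonoidHom with hT'
    set T'' := S'.map eQ.toAddMonoidHom with hT''
    have hcomplM : IsCompl T T'' := isCompl_map_addEquiv eQ hcompl
    have hBT : φM.range ≤ T := by
      rintro _ ⟨g, rfl⟩
      refine ⟨φ g, hle ⟨g, rfl⟩, ?_⟩
      show eQ (eQ.symm (φM g)) = φM g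
      exact eQ.apply_symm_apply _
    have hT : ∀ X : AddSubgroup M, X ≤ T → X ≠ ⊥ → φM.range ⊓ X ≠ ⊥ := by
      intro X hXT hX0 hbot
      have hYS : X.map eQ.symm.toAddMonoidHom ≤ S := by
        rintro _ ⟨x, hxX, rfl⟩
        obtain ⟨s, hsS, hs⟩ := hXT hxX
        rw [← hs]
        show eQ.symm (eQ s) ∈ S
        rw [eQ.symm_apply_apply]
        exact hsS
      have hY0 : X.map eQ.symm.toAddMonoidHom ≠ ⊥ := by
        obtain ⟨x, hxX, hx0⟩ := exists_ne_zero_of_ne_bot hX0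
        intro hb
        have hmem : eQ.symm x ∈ X.map eQ.symm.toAddMonoidHom := ⟨x, hxX, rfl⟩
        rw [hb, AddSubgroup.mem_bot] at hmem
        apply hx0
        have := congrArg eQ hmem
        rwa [eQ.apply_symm_apply, map_zero] at this
      obtain ⟨w, ⟨⟨g, hg⟩, hwY⟩, hw0⟩ := exists_ne_zero_of_ne_bot (hess _ hYS hY0)
      have h1 : eQ w ∈ φM.range := by
        refine ⟨g, ?_⟩
        rw [← hg]
        exact (eQ.apply_symm_apply (φM g)).symm
      have h2 : eQ w ∈ X := by
        obtain ⟨x, hxX, hx⟩ := hwY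
        have hxw : eQ w = x := by rw [← hx]; exact eQ.apply_symm_apply x
        rw [hxw]
        exact hxX
      have hmem : eQ w ∈ φM.range ⊓ X := ⟨h1, h2⟩
      rw [hbot, AddSubgroup.mem_bot] at hmem
      apply hw0
      have := congrArg eQ.symm hmem
      rwa [eQ.symm_apply_apply, map_zero] at this
    -- elements of the image have no 2-torsion
    have hBtor : ∀ w ∈ φM.range, (2 : ℤ) • w = 0 → w = 0 := by
      rintro _ ⟨g, rfl⟩ h2
      have hz : φM ((2 : ℤ) • g) = 0 := by rw [map_zsmul]; exact h2
      have hg0 : (2 : ℤ) • g = 0 := hφM (by rw [hz, map_zero])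
      have hg1 : g = 0 := by
        rcases smul_eq_zero.mp hg0 with h | h
        · norm_num at h
        · exact h
      rw [hg1, map_zero]
    -- the torsion element t lies in T''
    set t : M := ((1 : ZMod 2), (0 : F)) with ht'
    have ht2 : (2 : ℤ) • t = 0 := by
      refine Prod.ext ?_ ?_
      · show (2 : ℤ) • (1 : ZMod 2) = 0
        decide
      · show (2 : ℤ) • (0 : F) = 0
        simp
    have htT' : t ∈ T'' := by
      obtain ⟨y, hy, z, hz, hyz⟩ := AddSubgroup.mem_sup.mp
        (show t ∈ T ⊔ T'' by rw [hcomplM.sup_eq_top]; trivial)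
      have h2y : (2 : ℤ) • y ∈ T ⊓ T'' := by
        refine ⟨T.zsmul_mem hy 2, ?_⟩
        have hyneg : (2 : ℤ) • y = -((2 : ℤ) • z) :=
          eq_neg_of_add_eq_zero_left (by rw [← smul_add, hyz, ht2])
        rw [hyneg]
        exact T''.neg_mem (T''.zsmul_mem hz 2)
      rw [hcomplM.inf_eq_bot, AddSubgroup.mem_bot] at h2y
      have hy0 : y = 0 := by
        by_contra hy0
        have hZle : AddSubgroup.zmultiples y ≤ T := AddSubgroup.zmultiples_le.mpr hy
        have hZ0 : AddSubgroup.zmultiples y ≠ ⊥ := by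
          intro hb
          have hyy : y ∈ AddSubgroup.zmultiples y := AddSubgroup.mem_zmultiples y
          rw [hb, AddSubgroup.mem_bot] at hyy
          exact hy0 hyy
        obtain ⟨w, ⟨hwB, hwZ⟩, hw0⟩ := exists_ne_zero_of_ne_bot (hT _ hZle hZ0)
        obtain ⟨k, hk⟩ := AddSubgroup.mem_zmultiples_iff.mp hwZ
        apply hw0
        apply hBtor w hwB
        rw [← hk, smul_comm, h2y, smul_zero]
      rw [hy0, zero_add] at hyz
      rw [← hyz]
      exact hz
    -- the key element b0 = φM x0
    set x0 : G := e1.symm (Finsupp.single i0 1) with hx0'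
    have he1x0 : e1 x0 = Finsupp.single i0 1 := e1.apply_symm_apply _
    set b0 : M := φM x0 with hb0'
    have hb0T : b0 ∈ T := hBT ⟨x0, rfl⟩
    set m : M := ((0 : ZMod 2), e1 x0) with hm'
    have hb0 : b0 = t + (2 : ℤ) • m := by
      refine Prod.ext ?_ ?_
      · show (((e1 x0) i0 : ℤ) : ZMod 2) = 1 + (2 : ℤ) • (0 : ZMod 2)
        rw [he1x0, Finsupp.single_eq_same]
        norm_num
      · show (2 : ℤ) • e1 x0 = 0 + (2 : ℤ) • e1 x0
        rw [zero_add]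
    obtain ⟨u, hu, u', hu', huu⟩ := AddSubgroup.mem_sup.mp
      (show m ∈ T ⊔ T'' by rw [hcomplM.sup_eq_top]; trivial)
    have hkey : b0 - (2 : ℤ) • u ∈ T ⊓ T'' := by
      constructor
      · exact T.sub_mem hb0T (T.zsmul_mem hu 2)
      · have heq : b0 - (2 : ℤ) • u = t + (2 : ℤ) • u' := by
          rw [hb0, ← huu, smul_add]
          abel
        rw [heq]
        exact T''.add_mem htT' (T''.zsmul_mem hu' 2)
    rw [hcomplM.inf_eq_bot, AddSubgroup.mem_bot, sub_eq_zero] at hkey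
    have h1 : (((e1 x0) i0 : ℤ) : ZMod 2) = (2 : ℤ) • u.1 := congrArg Prod.fst hkey
    rw [he1x0, Finsupp.single_eq_same, Int.cast_one, zsmul_eq_mul] at h1
    have h2 : ((2 : ℤ) : ZMod 2) = 0 := by decide
    rw [h2, zero_mul] at h1
    exact one_ne_zero h1
  · intro hfin
    haveI := hfin
    intro N φ hφ
    set ι := Module.Free.ChooseBasisIndex ℤ G with hι
    haveI : Fintype ι := Module.Free.ChooseBasisIndex.fintype ℤ G
    set bG := Module.Free.chooseBasis ℤ G with hbG
    have hrankG : Module.rank ℤ G ≤ (Fintype.card ι : Cardinal) := by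
      rw [Module.Free.rank_eq_card_chooseBasisIndex, Cardinal.mk_fintype]
    -- Step 1 : N = ⊥
    have hNbot : N = ⊥ := by
      by_contra hN
      obtain ⟨x, hxN, hx0⟩ := exists_ne_zero_of_ne_bot hN
      have hsur := QuotientAddGroup.mk'_surjective N
      choose w hw using fun i => hsur (φ (bG i))
      set v : Option ι → G := fun o => o.elim x w with hv
      apply not_linearIndependent_option hrankG v
      rw [Fintype.linearIndependent_iff]
      intro g hg
      have hsome : ∀ i : ι, g (some i) = 0 := by
        have hq : φ (∑ i : ι, g (some i) • bG i) = 0 := by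
          have := congrArg (QuotientAddGroup.mk' N) hg
          rw [map_sum, map_zero, Fintype.sum_option] at this
          simp only [hv, Option.elim, map_zsmul, hw] at this
          have hx' : (QuotientAddGroup.mk' N) x = 0 := (QuotientAddGroup.eq_zero_iff x).mpr hxN
          rw [hx', smul_zero, zero_add] at this
          rw [map_sum]
          simpa [map_zsmul] using this
        have h0 : (∑ i : ι, g (some i) • bG i) = 0 := by
          apply hφ; rw [hq, map_zero]
        exact fun i => Fintype.linearIndependent_iff.mp bG.linearIndependent _ h0 i
      intro o
      cases o with
      | some i => exact hsome i
      | none =>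
        rw [Fintype.sum_option] at hg
        simp only [hv, Option.elim, hsome, zero_smul, Finset.sum_const_zero, add_zero] at hg
        exact (smul_eq_zero.mp hg).resolve_right hx0
    subst hNbot
    -- Step 2 : essential in the whole group
    refine ⟨⊤, ⊥, isCompl_top_bot, le_top, ?_⟩
    intro X _ hX
    obtain ⟨x, hxX, hx0⟩ := exists_ne_zero_of_ne_bot hX
    set e : G ⧸ (⊥ : AddSubgroup G) ≃+ G := QuotientAddGroup.quotientBot with he
    have hrankQ : Module.rank ℤ (G ⧸ (⊥ : AddSubgroup G)) ≤ (Fintype.card ι : Cardinal) := by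
      rw [e.toIntLinearEquiv.rank_eq]; exact hrankG
    set v : Option ι → G ⧸ (⊥ : AddSubgroup G) := fun o => o.elim x (fun i => φ (bG i)) with hv
    have hdep := not_linearIndependent_option hrankQ v
    rw [Fintype.linearIndependent_iff] at hdep
    push_neg at hdep
    obtain ⟨g, hg, o, ho⟩ := hdep
    rw [Fintype.sum_option] at hg
    simp only [hv, Option.elim] at hg
    have hφsum : ∀ c : ι → ℤ, (∑ i : ι, c i • φ (bG i)) = φ (∑ i : ι, c i • bG i) := by
      intro c; rw [map_sum]; simp [map_zsmul]
    have hgnone : g none ≠ 0 := by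
      intro h0
      rw [h0, zero_smul, zero_add, hφsum] at hg
      have := hφ (by rw [hg, map_zero] : φ (∑ i : ι, g (some i) • bG i) = φ 0)
      have hz := fun i => Fintype.linearIndependent_iff.mp bG.linearIndependent _ this i
      cases o with
      | none => exact ho h0
      | some i => exact ho (hz i)
    have hmem : g none • x ∈ φ.range ⊓ X := by
      constructor
      · have : g none • x = φ (-(∑ i : ι, g (some i) • bG i)) := by
          have h1 : g none • x = -(∑ i : ι, g (some i) • φ (bG i)) :=
            eq_neg_of_add_eq_zero_left hg
          rw [h1, hφsum, ← map_neg]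
        exact ⟨_, this.symm⟩
      · exact X.zsmul_mem hxX _
    have hne : g none • x ≠ 0 := by
      intro h0
      have : e (g none • x) = 0 := by rw [h0, map_zero]
      rw [map_zsmul] at this
      rcases smul_eq_zero.mp this with h | h
      · exact hgnone h
      · exact hx0 (by simpa using e.injective (by simpa using h))
    intro hbot
    rw [hbot] at hmem
    exact hne (by simpa using hmem)
end

section
/- If the abelian group G is isomorphic to D ⊕ E with D divisible and E elementary (each p-primary component of E is killed by p), then G is semi-generalized co-Bassian. -/
/-! ### Auxiliary development -/

namespace SGCBAux

open AddSubgroup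

variable {X : Type*} [AddCommGroup X]

/-- Elementwise essentiality of `A` in `S`. -/
def Ess (A S : AddSubgroup X) : Prop :=
  A ≤ S ∧ ∀ x ∈ S, x ≠ 0 → ∃ n : ℤ, n • x ∈ A ∧ n • x ≠ 0

/-- Every element of `A` is killed by a positive squarefree natural number. -/
def SqfT (A : AddSubgroup X) : Prop :=
  ∀ x ∈ A, ∃ u : ℕ, 0 < u ∧ u • x = 0 ∧ Squarefree u

def SqfTG (V : Type*) [AddCommGroup V] : Prop :=
  ∀ x : V, ∃ u : ℕ, 0 < u ∧ u • x = 0 ∧ Squarefree u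

/-- `V` is (divisible) ⊕ (squarefree-torsion). -/
def DE (V : Type*) [AddCommGroup V] : Prop :=
  ∃ D E : AddSubgroup V, IsCompl D E ∧ IsDivisibleGroup ↥D ∧ SqfT E

theorem ess_refl (A : AddSubgroup X) : Ess A A :=
  ⟨le_rfl, fun x hx hx0 => ⟨1, by simpa using hx, by simpa using hx0⟩⟩

theorem ess_sup {A₁ S₁ A₂ S₂ : AddSubgroup X} (h₁ : Ess A₁ S₁) (h₂ : Ess A₂ S₂)
    (hdisj : S₁ ⊓ S₂ = ⊥) : Ess (A₁ ⊔ A₂) (S₁ ⊔ S₂) := by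
  refine ⟨sup_le_sup h₁.1 h₂.1, fun x hx hx0 => ?_⟩
  rcases mem_sup.1 hx with ⟨s₁, hs₁, s₂, hs₂, rfl⟩
  by_cases h10 : s₁ = 0
  · subst h10
    rcases h₂.2 s₂ hs₂ (by simpa using hx0) with ⟨n, hn1, hn2⟩
    exact ⟨n, by rw [zero_add]; exact mem_sup_right hn1, by rw [zero_add]; exact hn2⟩
  · rcases h₁.2 s₁ hs₁ h10 with ⟨n, hn1, hn2⟩
    by_cases h20 : n • s₂ = 0
    · refine ⟨n, ?_, ?_⟩
      · rw [smul_add, h20, add_zero]; exact mem_sup_left hn1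
      · rw [smul_add, h20, add_zero]; exact hn2
    · rcases h₂.2 (n • s₂) (zsmul_mem hs₂ n) h20 with ⟨m, hm1, hm2⟩
      refine ⟨m * n, ?_, ?_⟩
      · rw [mul_smul, smul_add, smul_add]
        exact add_mem (mem_sup_left (zsmul_mem hn1 m)) (mem_sup_right hm1)
      · rw [mul_smul, smul_add, smul_add]
        intro hc
        apply hm2
        have heq : m • n • s₂ = -(m • n • s₁) := eq_neg_of_add_eq_zero_right hc
        have h1 : m • n • s₂ ∈ S₁ := by
          rw [heq]; exact neg_mem (zsmul_mem (zsmul_mem hs₁ n) m)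
        have h2 : m • n • s₂ ∈ S₂ := zsmul_mem (zsmul_mem hs₂ n) m
        have : m • n • s₂ ∈ S₁ ⊓ S₂ := ⟨h1, h2⟩
        rw [hdisj] at this
        simpa using this

theorem mem_of_coprime_smul {C : AddSubgroup X} {y : X} {a b : ℕ} (h : Nat.Coprime a b)
    (ha : a • y ∈ C) (hb : b • y ∈ C) : y ∈ C := by
  have hg : (1 : ℤ) = a * Nat.gcdA a b + b * Nat.gcdB a b := by
    have h2 := Nat.gcd_eq_gcd_ab a b
    rwa [Nat.Coprime.gcd_eq_one h, Nat.cast_one] at h2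
  have hy : y = Nat.gcdA a b • ((a : ℤ) • y) + Nat.gcdB a b • ((b : ℤ) • y) := by
    rw [← mul_smul, ← mul_smul, ← add_smul, mul_comm (Nat.gcdA a b) (a : ℤ),
      mul_comm (Nat.gcdB a b) (b : ℤ), ← hg, one_smul]
  rw [hy]
  refine add_mem (zsmul_mem ?_ _) (zsmul_mem ?_ _)
  · rw [natCast_zsmul]; exact ha
  · rw [natCast_zsmul]; exact hb

theorem sqfTG_of_elementary {V : Type*} [AddCommGroup V] (h : IsElementaryGroup V) :
    SqfTG V := by
  have key : ∀ n : ℕ, ∀ x : V, 0 < n → n • x = 0 →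
      ∃ u : ℕ, 0 < u ∧ u • x = 0 ∧ Squarefree u := by
    intro n
    induction n using Nat.strong_induction_on with
    | _ n ih =>
      intro x hn hx
      by_cases hsq : Squarefree n
      · exact ⟨n, hn, hx, hsq⟩
      · rw [Nat.squarefree_iff_prime_squarefree] at hsq
        push_neg at hsq
        obtain ⟨p, hp, t, ht⟩ := hsq
        have hp2 : 2 ≤ p := hp.two_le
        have htpos : 0 < t := by
          rcases Nat.eq_zero_or_pos t with h0 | h0
          · subst h0; rw [mul_zero] at ht; omega
          · exact h0
        have hmem : t • x ∈ pComponent V p := by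
          refine ⟨2, ?_⟩
          rw [← mul_smul, pow_two, ← ht, hx]
        have hpt : (p * t) • x = 0 := by
          have h3 := h.2 p hp _ hmem
          rwa [← mul_smul] at h3
        have hlt : p * t < n := by nlinarith
        exact ih (p * t) hlt x (by positivity) hpt
  intro x
  obtain ⟨n, hn, hnx⟩ := h.1 x
  exact key n x hn hnx

noncomputable def divisibleByOf {V : Type*} [AddCommGroup V] (h : IsDivisibleGroup V) :
    DivisibleBy V ℤ where
  div a n :=
    if hn : n = 0 then 0
    else if 0 ≤ n then (h a n.natAbs (Int.natAbs_pos.2 hn)).choose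
    else -(h a n.natAbs (Int.natAbs_pos.2 hn)).choose
  div_zero a := by simp
  div_cancel {n} a hn := by
    show n • (if hn : n = 0 then (0 : V) else if 0 ≤ n then (h a n.natAbs (Int.natAbs_pos.2 hn)).choose
      else -(h a n.natAbs (Int.natAbs_pos.2 hn)).choose) = a
    rw [dif_neg hn]
    by_cases hpos : 0 ≤ n
    · rw [if_pos hpos]
      have hspec := (h a n.natAbs (Int.natAbs_pos.2 hn)).choose_spec
      calc n • (h a n.natAbs (Int.natAbs_pos.2 hn)).choose
          = ((n.natAbs : ℤ)) • (h a n.natAbs (Int.natAbs_pos.2 hn)).choose := by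
            rw [Int.natAbs_of_nonneg hpos]
        _ = a := by rw [natCast_zsmul, hspec]
    · rw [if_neg hpos]
      have hspec := (h a n.natAbs (Int.natAbs_pos.2 hn)).choose_spec
      have hneg : ((n.natAbs : ℤ)) = -n := by
        rcases Int.natAbs_eq n with he | he
        · omega
        · omega
      calc n • -(h a n.natAbs (Int.natAbs_pos.2 hn)).choose
          = (-n) • (h a n.natAbs (Int.natAbs_pos.2 hn)).choose := by
            rw [smul_neg, ← neg_smul]
        _ = ((n.natAbs : ℤ)) • (h a n.natAbs (Int.natAbs_pos.2 hn)).choose := by rw [hneg]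
        _ = a := by rw [natCast_zsmul, hspec]

theorem ext_hom {Q M N' : Type*} [AddCommGroup Q] [AddCommGroup M] [AddCommGroup N']
    (hQ : IsDivisibleGroup Q) (f : M →+ N') (hf : Function.Injective f) (g : M →+ Q) :
    ∃ h : N' →+ Q, h.comp f = g := by
  haveI := divisibleByOf hQ
  exact (Module.Baer.of_divisible Q).extension_property_addMonoidHom f hf g

theorem divisible_range {M N' : Type*} [AddCommGroup M] [AddCommGroup N'] (f : M →+ N')
    (hM : IsDivisibleGroup M) : IsDivisibleGroup ↥f.range := by
  rintro ⟨x, m, rfl⟩ n hn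
  obtain ⟨y, hy⟩ := hM m n hn
  refine ⟨⟨f y, ⟨y, rfl⟩⟩, ?_⟩
  apply Subtype.ext
  show n • f y = f m
  rw [← map_nsmul, hy]

theorem sqfT_range {M N' : Type*} [AddCommGroup M] [AddCommGroup N'] (f : M →+ N')
    (hM : SqfTG M) : SqfT f.range := by
  rintro x ⟨m, rfl⟩
  obtain ⟨u, hu, hum, husq⟩ := hM m
  exact ⟨u, hu, by rw [← map_nsmul, hum, map_zero], husq⟩

theorem exists_maximal_disjoint (B : AddSubgroup X) :
    ∃ H : AddSubgroup X, B ⊓ H = ⊥ ∧ ∀ K : AddSubgroup X, B ⊓ K = ⊥ → H ≤ K → K = H := by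
  obtain ⟨m, -, hmem, hm⟩ := zorn_le_nonempty₀ {H : AddSubgroup X | B ⊓ H = ⊥}
    (fun c hcs hchain y hy => by
      refine ⟨sSup c, ?_, fun z hz => le_sSup hz⟩
      show B ⊓ sSup c = ⊥
      rw [AddSubgroup.eq_bot_iff_forall]
      rintro x ⟨hxB, hxS⟩
      rcases (AddSubgroup.mem_sSup_of_directedOn ⟨y, hy⟩ hchain.directedOn).1 hxS
        with ⟨H, hHc, hxH⟩
      have hbot := hcs hHc
      have hx : x ∈ B ⊓ H := ⟨hxB, hxH⟩
      rw [hbot] at hx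
      simpa using hx) ⊥ (by simp)
  exact ⟨m, hmem, fun K hK hle => le_antisymm (hm hK hle) hle⟩

theorem quot_ess {B H : AddSubgroup X} (hBH : B ⊓ H = ⊥)
    (hmax : ∀ K : AddSubgroup X, B ⊓ K = ⊥ → H ≤ K → K = H) (z : X ⧸ H) (hz : z ≠ 0) :
    ∃ (n : ℤ) (b : X), b ∈ B ∧ b ≠ 0 ∧ n • z = QuotientAddGroup.mk' H b ∧
      (QuotientAddGroup.mk' H b : X ⧸ H) ≠ 0 := by
  obtain ⟨q, rfl⟩ := QuotientAddGroup.mk'_surjective H z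
  have hq : q ∉ H := by
    intro hmem
    apply hz
    rw [QuotientAddGroup.mk'_apply, QuotientAddGroup.eq_zero_iff]
    exact hmem
  have hKne : ¬ (B ⊓ (H ⊔ AddSubgroup.zmultiples q) = ⊥) := by
    intro hbot
    have heq := hmax _ hbot le_sup_left
    apply hq
    rw [← heq]
    exact mem_sup_right (AddSubgroup.mem_zmultiples q)
  obtain ⟨b, hbmem, hb0⟩ : ∃ b, b ∈ B ⊓ (H ⊔ AddSubgroup.zmultiples q) ∧ b ≠ 0 := by
    by_contra hcon
    push_neg at hcon
    exact hKne ((AddSubgroup.eq_bot_iff_forall _).2 fun x hx => by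
      by_contra h0
      exact h0 (hcon x hx ▸ rfl) )
  obtain ⟨hbB, hbK⟩ := hbmem
  rcases mem_sup.1 hbK with ⟨hh, hhH, w, hw, hsum⟩
  rcases AddSubgroup.mem_zmultiples_iff.1 hw with ⟨n, rfl⟩
  have hbH : b ∉ H := by
    intro hmem
    have hx : b ∈ B ⊓ H := ⟨hbB, hmem⟩
    rw [hBH] at hx
    exact hb0 (by simpa using hx)
  refine ⟨n, b, hbB, hb0, ?_, ?_⟩
  · rw [← map_zsmul (QuotientAddGroup.mk' H) n q]
    rw [QuotientAddGroup.mk'_eq_mk']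
    exact ⟨hh, hhH, by rw [add_comm]; exact hsum⟩
  · rw [QuotientAddGroup.mk'_apply]
    intro hc
    exact hbH ((QuotientAddGroup.eq_zero_iff b).1 hc)

theorem split (W C : AddSubgroup X) (hW : IsDivisibleGroup ↥W) (hWC : W ⊓ C = ⊥) :
    ∃ Y : AddSubgroup X, IsCompl W Y ∧ C ≤ Y := by
  set q := QuotientAddGroup.mk' C with hq
  have hinj : Function.Injective (q.comp W.subtype) := by
    rw [injective_iff_map_eq_zero]
    rintro ⟨w, hw⟩ h0
    have hx : w ∈ W ⊓ C := ⟨hw, (QuotientAddGroup.eq_zero_iff w).1 h0⟩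
    rw [hWC] at hx
    exact Subtype.ext (by simpa using hx)
  obtain ⟨g, hg⟩ := ext_hom hW (q.comp W.subtype) hinj (AddMonoidHom.id ↥W)
  set r : X →+ X := W.subtype.comp (g.comp q) with hr
  have hrW : ∀ w ∈ W, r w = w := by
    intro w hw
    have h2 := DFunLike.congr_fun hg ⟨w, hw⟩
    exact congrArg Subtype.val h2
  have hrange : ∀ x, r x ∈ W := fun x => (g (q x)).2
  refine ⟨r.ker, ⟨?_, ?_⟩, ?_⟩
  · rw [disjoint_iff, AddSubgroup.eq_bot_iff_forall]
    rintro x ⟨hxW, hxk⟩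
    rw [← hrW x hxW]
    exact hxk
  · rw [codisjoint_iff, eq_top_iff]
    intro x _
    have h1 : r (x - r x) = 0 := by
      rw [map_sub, hrW (r x) (hrange x), sub_self]
    exact mem_sup.2 ⟨r x, hrange x, x - r x, h1, by abel⟩
  · intro c hc
    show r c = 0
    have h0 : q c = 0 := (QuotientAddGroup.eq_zero_iff c).2 hc
    show W.subtype (g (q c)) = 0
    rw [h0, map_zero, map_zero]

theorem div_ess_summand {Q : Type*} [AddCommGroup Q] (hQ : IsDivisibleGroup Q)
    (B : AddSubgroup Q) :
    ∃ S S' : AddSubgroup Q, IsCompl S S' ∧ Ess B S ∧ IsDivisibleGroup ↥S := by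
  obtain ⟨H, hBH, hmax⟩ := exists_maximal_disjoint B
  set π := QuotientAddGroup.mk' H with hπ
  have hinj : Function.Injective (π.comp B.subtype) := by
    rw [injective_iff_map_eq_zero]
    rintro ⟨b, hb⟩ hb0
    have hx : b ∈ B ⊓ H := ⟨hb, (QuotientAddGroup.eq_zero_iff b).1 hb0⟩
    rw [hBH] at hx
    exact Subtype.ext (by simpa using hx)
  obtain ⟨f, hf⟩ := ext_hom hQ (π.comp B.subtype) hinj B.subtype
  have hBS : ∀ b ∈ B, (f.comp π) b = b := by
    intro b hb
    exact DFunLike.congr_fun hf ⟨b, hb⟩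
  have hdiv : IsDivisibleGroup ↥(f.comp π).range := divisible_range _ hQ
  obtain ⟨S', hS', -⟩ := split (f.comp π).range ⊥ hdiv (by simp)
  refine ⟨(f.comp π).range, S', hS', ⟨fun b hb => ⟨b, hBS b hb⟩, ?_⟩, hdiv⟩
  rintro x ⟨w, rfl⟩ hx0
  have hz : π w ≠ 0 := by
    intro h0
    apply hx0
    show f (π w) = 0
    rw [h0, map_zero]
  obtain ⟨n, b, hbB, hb0, hnz, -⟩ := quot_ess hBH hmax (π w) hz
  have hfb : f (π b) = b := hBS b hbB
  have hkey : n • (f.comp π) w = b := by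
    show n • f (π w) = b
    rw [← map_zsmul f, hnz]
    exact hfb
  exact ⟨n, hkey ▸ hbB, hkey ▸ hb0⟩

theorem sqf_compl {V : Type*} [AddCommGroup V] (hV : SqfTG V) (W : AddSubgroup V) :
    ∃ W' : AddSubgroup V, IsCompl W W' := by
  obtain ⟨W', hdisj, hmax⟩ := exists_maximal_disjoint W
  refine ⟨W', disjoint_iff.2 hdisj, ?_⟩
  rw [codisjoint_iff]
  by_contra hne
  obtain ⟨b, hb⟩ : ∃ b : V, b ∉ W ⊔ W' := by
    by_contra hcon
    push_neg at hcon
    exact hne ((AddSubgroup.eq_top_iff' _).2 hcon)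
  classical
  have hex : ∃ n : ℕ, 0 < n ∧ n • b ∈ W ⊔ W' := by
    obtain ⟨u, hu, hub, -⟩ := hV b
    exact ⟨u, hu, by rw [hub]; exact zero_mem _⟩
  set n := Nat.find hex with hn
  obtain ⟨hnpos, hnbC⟩ := Nat.find_spec hex
  have hn1 : n ≠ 1 := by
    intro h1
    apply hb
    have h2 : n • b ∈ W ⊔ W' := hnbC
    rw [h1, one_nsmul] at h2
    exact h2
  have hpp : (n.minFac).Prime := Nat.minFac_prime hn1
  have hpd : n.minFac ∣ n := Nat.minFac_dvd n
  set p := n.minFac with hp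
  set m := n / p with hm
  have hmn : p * m = n := Nat.mul_div_cancel' hpd
  have hmpos : 0 < m := by
    rcases Nat.eq_zero_or_pos m with h0 | h0
    · rw [h0, mul_zero] at hmn; omega
    · exact h0
  have hmlt : m < n := by nlinarith [hpp.two_le]
  have hyC : m • b ∉ W ⊔ W' := fun hyC => (Nat.find_min hex hmlt) ⟨hmpos, hyC⟩
  have hpyC : p • (m • b) ∈ W ⊔ W' := by rw [← mul_smul, hmn]; exact hnbC
  obtain ⟨u, hupos, huy, husq⟩ := hV (m • b)
  have hpu : p ∣ u := by
    by_contra hpu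
    exact hyC (mem_of_coprime_smul (hpp.coprime_iff_not_dvd.2 hpu) hpyC
      (by rw [huy]; exact zero_mem _))
  set v := u / p with hv
  have hvu : p * v = u := Nat.mul_div_cancel' hpu
  have hpv : ¬ p ∣ v := by
    intro hd
    obtain ⟨w, hw⟩ := hd
    exact (Nat.squarefree_iff_prime_squarefree.1 husq) p hpp ⟨w, by rw [← hvu, hw]; ring⟩
  set y₂ := v • m • b with hy2
  have hpy₂ : p • y₂ = 0 := by rw [hy2, ← mul_smul, hvu, huy]
  have hy₂C : y₂ ∉ W ⊔ W' := by
    intro h2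
    exact hyC (mem_of_coprime_smul (hpp.coprime_iff_not_dvd.2 hpv) hpyC h2)
  have hdisj'' : W ⊓ (W' ⊔ AddSubgroup.zmultiples y₂) = ⊥ := by
    rw [AddSubgroup.eq_bot_iff_forall]
    rintro x ⟨hxW, hxW''⟩
    rcases mem_sup.1 hxW'' with ⟨w', hw', z, hz, hsum⟩
    rcases AddSubgroup.mem_zmultiples_iff.1 hz with ⟨k, rfl⟩
    have hkC : k • y₂ ∈ W ⊔ W' := by
      have he : k • y₂ = x - w' := by rw [← hsum]; abel
      rw [he]
      exact sub_mem (mem_sup_left hxW) (mem_sup_right hw')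
    set t := (k % (p : ℤ)).toNat with htdef
    have hppos : (0 : ℤ) < (p : ℤ) := by exact_mod_cast hpp.pos
    have h0 : (0 : ℤ) ≤ k % (p : ℤ) := Int.emod_nonneg k (by omega)
    have hteq : (t : ℤ) = k % (p : ℤ) := Int.toNat_of_nonneg h0
    have hmod : k • y₂ = t • y₂ := by
      have hfac : k = (p : ℤ) * (k / (p : ℤ)) + k % (p : ℤ) := (Int.mul_ediv_add_emod k (p : ℤ)).symm
      calc k • y₂ = ((p : ℤ) * (k / (p : ℤ)) + k % (p : ℤ)) • y₂ := by rw [← hfac]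
        _ = (k / (p : ℤ)) • ((p : ℤ) • y₂) + (k % (p : ℤ)) • y₂ := by
              rw [add_smul, mul_comm, mul_smul]
        _ = (k % (p : ℤ)) • y₂ := by rw [natCast_zsmul, hpy₂, smul_zero, zero_add]
        _ = t • y₂ := by rw [← hteq, natCast_zsmul]
    by_cases ht0 : t = 0
    · have hx : x = w' := by rw [← hsum, hmod, ht0, zero_nsmul, add_zero]
      have hmem : x ∈ W ⊓ W' := ⟨hxW, hx ▸ hw'⟩
      rw [hdisj] at hmem
      simpa using hmem
    · exfalso
      have hlt : k % (p : ℤ) < (p : ℤ) := Int.emod_lt_of_pos k hppos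
      have htp : t < p := by omega
      have hnd : ¬ p ∣ t := fun hd =>
        absurd (Nat.le_of_dvd (Nat.pos_of_ne_zero ht0) hd) (not_le.2 htp)
      have htC : t • y₂ ∈ W ⊔ W' := by rw [← hmod]; exact hkC
      exact hy₂C (mem_of_coprime_smul (hpp.coprime_iff_not_dvd.2 hnd)
        (by rw [hpy₂]; exact zero_mem _) htC)
  apply hy₂C
  have hmem : y₂ ∈ W' ⊔ AddSubgroup.zmultiples y₂ :=
    mem_sup_right (AddSubgroup.mem_zmultiples y₂)
  rw [hmax _ hdisj'' le_sup_left] at hmem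
  exact mem_sup_right hmem

theorem isCompl_toIntSubmodule {D E : AddSubgroup X} (h : IsCompl D E) :
    IsCompl (AddSubgroup.toIntSubmodule D) (AddSubgroup.toIntSubmodule E) :=
  ⟨by rw [disjoint_iff, ← OrderIso.map_inf, h.inf_eq_bot, OrderIso.map_bot],
   by rw [codisjoint_iff, ← OrderIso.map_sup, h.sup_eq_top, OrderIso.map_top]⟩

/-- Projection onto `E` along `D`, as a map `X → X`. -/
noncomputable def projOf {D E : AddSubgroup X} (h : IsCompl D E) : X →+ X :=
  ((AddSubgroup.toIntSubmodule E).subtype.comp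
    (Submodule.linearProjOfIsCompl (AddSubgroup.toIntSubmodule E)
      (AddSubgroup.toIntSubmodule D) (isCompl_toIntSubmodule h).symm)).toAddMonoidHom

theorem projOf_mem {D E : AddSubgroup X} (h : IsCompl D E) (x : X) : projOf h x ∈ E :=
  (Submodule.linearProjOfIsCompl (AddSubgroup.toIntSubmodule E)
      (AddSubgroup.toIntSubmodule D) (isCompl_toIntSubmodule h).symm x).2

theorem projOf_left {D E : AddSubgroup X} (h : IsCompl D E) {x : X} (hx : x ∈ E) :
    projOf h x = x :=
  congrArg Subtype.val (Submodule.linearProjOfIsCompl_apply_left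
    (isCompl_toIntSubmodule h).symm (⟨x, hx⟩ : AddSubgroup.toIntSubmodule E))

theorem projOf_right {D E : AddSubgroup X} (h : IsCompl D E) {x : X} (hx : x ∈ D) :
    projOf h x = 0 :=
  congrArg Subtype.val (Submodule.linearProjOfIsCompl_apply_right
    (isCompl_toIntSubmodule h).symm (⟨x, hx⟩ : AddSubgroup.toIntSubmodule D))

theorem sub_projOf_mem {D E : AddSubgroup X} (h : IsCompl D E) (x : X) :
    x - projOf h x ∈ D := by
  have hx : x ∈ D ⊔ E := by rw [h.sup_eq_top]; trivial
  rcases mem_sup.1 hx with ⟨d, hd, e, he, rfl⟩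
  have hpe : projOf h (d + e) = e := by
    rw [map_add, projOf_right h hd, projOf_left h he, zero_add]
  rw [hpe, add_sub_cancel_right]
  exact hd

theorem ess_map_subtype {Y : AddSubgroup X} {A' S' : AddSubgroup ↥Y} (h : Ess A' S') :
    Ess (A'.map Y.subtype) (S'.map Y.subtype) := by
  constructor
  · exact AddSubgroup.map_mono h.1
  · rintro x hx hx0
    rcases AddSubgroup.mem_map.1 hx with ⟨s, hs, rfl⟩
    have hs0 : s ≠ 0 := by
      intro h0
      apply hx0
      rw [h0, map_zero]
    rcases h.2 s hs hs0 with ⟨n, hn1, hn2⟩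
    refine ⟨n, ?_, ?_⟩
    · rw [← map_zsmul]
      exact AddSubgroup.mem_map.2 ⟨n • s, hn1, rfl⟩
    · rw [← map_zsmul]
      intro hc
      exact hn2 (Subtype.val_injective hc)

theorem ess_map_of_comap {Y A : AddSubgroup X} {S' : AddSubgroup ↥Y}
    (h : Ess (A.comap Y.subtype) S') (hA : A ≤ Y) : Ess A (S'.map Y.subtype) := by
  have h2 := ess_map_subtype h
  rwa [AddSubgroup.map_comap_eq, AddSubgroup.range_subtype, inf_eq_right.2 hA] at h2

theorem elem_ess_summand {Z : Type*} [AddCommGroup Z] (hZ : DE Z) (B : AddSubgroup Z)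
    (hB : SqfT B) : ∃ S S' : AddSubgroup Z, IsCompl S S' ∧ Ess B S := by
  obtain ⟨D, E, hDE, hDdiv, hEsf⟩ := hZ
  obtain ⟨S₁, S₂, hS₁₂, hS₁ess, -⟩ := div_ess_summand hDdiv ((B ⊓ D).comap D.subtype)
  set D₁ := S₁.map D.subtype with hD₁
  set D₂ := S₂.map D.subtype with hD₂
  have hD₁D : D₁ ≤ D := map_subtype_le _
  have hD₂D : D₂ ≤ D := map_subtype_le _
  have hessB₀ : Ess (B ⊓ D) D₁ := ess_map_of_comap hS₁ess inf_le_right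
  have hD₁₂sup : D₁ ⊔ D₂ = D := by
    rw [hD₁, hD₂, ← AddSubgroup.map_sup, hS₁₂.sup_eq_top, ← AddMonoidHom.range_eq_map,
      AddSubgroup.range_subtype]
  have hD₁₂inf : D₁ ⊓ D₂ = ⊥ := by
    rw [AddSubgroup.eq_bot_iff_forall]
    rintro x ⟨hx1, hx2⟩
    rcases AddSubgroup.mem_map.1 hx1 with ⟨s, hs, rfl⟩
    rcases AddSubgroup.mem_map.1 hx2 with ⟨s', hs', heq⟩
    have hss : s' = s := Subtype.val_injective heq
    have hmem : s ∈ S₁ ⊓ S₂ := ⟨hs, by rw [← hss]; exact hs'⟩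
    rw [hS₁₂.inf_eq_bot] at hmem
    have hs0 : s = 0 := by simpa using hmem
    rw [hs0, map_zero]
  -- complement of B ⊓ D inside B
  have hBsqf : SqfTG ↥B := by
    rintro ⟨x, hx⟩
    obtain ⟨u, hu, hux, husq⟩ := hB x hx
    exact ⟨u, hu, Subtype.ext hux, husq⟩
  obtain ⟨W', hW'⟩ := sqf_compl hBsqf ((B ⊓ D).comap B.subtype)
  set B₁ := W'.map B.subtype with hB₁
  have hB₁B : B₁ ≤ B := map_subtype_le _
  have hB₀B₁sup : (B ⊓ D) ⊔ B₁ = B := by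
    have h1 : ((B ⊓ D).comap B.subtype).map B.subtype = B ⊓ D := by
      rw [AddSubgroup.map_comap_eq, AddSubgroup.range_subtype, inf_eq_right.2 inf_le_left]
    rw [← h1, hB₁, ← AddSubgroup.map_sup, hW'.sup_eq_top, ← AddMonoidHom.range_eq_map,
      AddSubgroup.range_subtype]
  have hB₀B₁inf : (B ⊓ D) ⊓ B₁ = ⊥ := by
    rw [AddSubgroup.eq_bot_iff_forall]
    rintro x ⟨hx0, hx1⟩
    rcases AddSubgroup.mem_map.1 hx1 with ⟨w, hw, rfl⟩
    have hwmem : w ∈ ((B ⊓ D).comap B.subtype) ⊓ W' := ⟨AddSubgroup.mem_comap.2 hx0, hw⟩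
    rw [hW'.inf_eq_bot] at hwmem
    have hw0 : w = 0 := by simpa using hwmem
    rw [hw0, map_zero]
  have hB₁D : B₁ ⊓ D = ⊥ := by
    rw [AddSubgroup.eq_bot_iff_forall]
    rintro x ⟨hx1, hxD⟩
    have hmem : x ∈ (B ⊓ D) ⊓ B₁ := ⟨⟨hB₁B hx1, hxD⟩, hx1⟩
    rw [hB₀B₁inf] at hmem
    simpa using hmem
  -- image of B₁ inside E, and its complement
  set π := projOf hDE with hπdef
  set E'' := B₁.map π with hE''def
  have hE''E : E'' ≤ E := by
    rintro x ⟨b, hb, rfl⟩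
    exact projOf_mem hDE b
  have hEsqf : SqfTG ↥E := by
    rintro ⟨x, hx⟩
    obtain ⟨u, hu, hux, husq⟩ := hEsf x hx
    exact ⟨u, hu, Subtype.ext hux, husq⟩
  obtain ⟨WE', hWE'⟩ := sqf_compl hEsqf (E''.comap E.subtype)
  set E₂ := WE'.map E.subtype with hE₂def
  have hE₂E : E₂ ≤ E := map_subtype_le _
  have hE''E₂sup : E'' ⊔ E₂ = E := by
    have h1 : (E''.comap E.subtype).map E.subtype = E'' := by
      rw [AddSubgroup.map_comap_eq, AddSubgroup.range_subtype, inf_eq_right.2 hE''E]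
    rw [← h1, hE₂def, ← AddSubgroup.map_sup, hWE'.sup_eq_top, ← AddMonoidHom.range_eq_map,
      AddSubgroup.range_subtype]
  have hE''E₂inf : E'' ⊓ E₂ = ⊥ := by
    rw [AddSubgroup.eq_bot_iff_forall]
    rintro x ⟨hx0, hx1⟩
    rcases AddSubgroup.mem_map.1 hx1 with ⟨w, hw, rfl⟩
    have hwmem : w ∈ (E''.comap E.subtype) ⊓ WE' := ⟨AddSubgroup.mem_comap.2 hx0, hw⟩
    rw [hWE'.inf_eq_bot] at hwmem
    have hw0 : w = 0 := by simpa using hwmem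
    rw [hw0, map_zero]
  have hDB₁ : D ⊔ B₁ = D ⊔ E'' := by
    apply le_antisymm
    · apply sup_le le_sup_left
      intro b hb
      have h1 : b - π b ∈ D := sub_projOf_mem hDE b
      have h2 : π b ∈ E'' := ⟨b, hb, rfl⟩
      have h3 : b = (b - π b) + π b := by abel
      rw [h3]
      exact add_mem (mem_sup_left h1) (mem_sup_right h2)
    · apply sup_le le_sup_left
      rintro x ⟨b, hb, rfl⟩
      have h1 : b - π b ∈ D := sub_projOf_mem hDE b
      have h3 : π b = b - (b - π b) := by abel
      rw [h3]
      exact sub_mem (mem_sup_right hb) (mem_sup_left h1)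
  refine ⟨D₁ ⊔ B₁, D₂ ⊔ E₂, ⟨?_, ?_⟩, ?_⟩
  · rw [disjoint_iff, AddSubgroup.eq_bot_iff_forall]
    rintro x ⟨hx1, hx2⟩
    rcases mem_sup.1 hx1 with ⟨d₁, hd₁, b₁, hb₁, rfl⟩
    rcases mem_sup.1 hx2 with ⟨d₂, hd₂, e₂, he₂, hsum⟩
    have hπeq : e₂ = π b₁ := by
      have h1 := congrArg π hsum
      rw [map_add, map_add, projOf_right hDE (hD₁D hd₁), projOf_right hDE (hD₂D hd₂),
        zero_add, zero_add, projOf_left hDE (hE₂E he₂)] at h1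
      exact h1
    have hπ0 : π b₁ = 0 := by
      have hmem : π b₁ ∈ E'' ⊓ E₂ := ⟨⟨b₁, hb₁, rfl⟩, by rw [← hπeq]; exact he₂⟩
      rw [hE''E₂inf] at hmem
      simpa using hmem
    have hb₁0 : b₁ = 0 := by
      have hbD : b₁ ∈ D := by
        have h1 : b₁ - π b₁ ∈ D := sub_projOf_mem hDE b₁
        rwa [hπ0, sub_zero] at h1
      have hmem : b₁ ∈ B₁ ⊓ D := ⟨hb₁, hbD⟩
      rw [hB₁D] at hmem
      simpa using hmem
    have hxd₂ : d₁ + b₁ = d₂ := by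
      rw [← hsum, hπeq, hπ0, add_zero]
    have hmemD : d₁ + b₁ ∈ D₁ ⊓ D₂ := ⟨by rw [hb₁0, add_zero]; exact hd₁,
      by rw [hxd₂]; exact hd₂⟩
    rw [hD₁₂inf] at hmemD
    simpa using hmemD
  · rw [codisjoint_iff, sup_sup_sup_comm, hD₁₂sup, ← sup_assoc, hDB₁, sup_assoc,
      hE''E₂sup, hDE.sup_eq_top]
  · have h1 := ess_sup hessB₀ (ess_refl B₁) (by
      rw [AddSubgroup.eq_bot_iff_forall]
      rintro x ⟨hx1, hx2⟩
      have hmem : x ∈ B₁ ⊓ D := ⟨hx2, hD₁D hx1⟩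
      rw [hB₁D] at hmem
      simpa using hmem)
    rwa [hB₀B₁sup] at h1

theorem de_of_surj {Z W : Type*} [AddCommGroup Z] [AddCommGroup W] (hZ : DE Z) (f : Z →+ W)
    (hf : Function.Surjective f) : DE W := by
  obtain ⟨D, E, hDE, hdiv, hsf⟩ := hZ
  have hdiv' : IsDivisibleGroup ↥(f.comp D.subtype).range := divisible_range _ hdiv
  obtain ⟨Y, hY, -⟩ := split (f.comp D.subtype).range ⊥ hdiv' (by simp)
  refine ⟨_, Y, hY, hdiv', ?_⟩
  intro y hy
  obtain ⟨z, rfl⟩ := hf y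
  have hz : z ∈ D ⊔ E := by rw [hDE.sup_eq_top]; trivial
  rcases mem_sup.1 hz with ⟨d, hd, e, he, rfl⟩
  obtain ⟨u, hu, hue, husq⟩ := hsf e he
  refine ⟨u, hu, ?_, husq⟩
  have h1 : u • f (d + e) ∈ (f.comp D.subtype).range := by
    rw [← map_nsmul, smul_add, hue, add_zero]
    exact ⟨⟨u • d, nsmul_mem hd u⟩, rfl⟩
  have h3 : u • f (d + e) ∈ (f.comp D.subtype).range ⊓ Y := ⟨h1, nsmul_mem hy u⟩
  rw [hY.inf_eq_bot] at h3
  simpa using h3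

end SGCBAux

theorem isSGCB_of_DplusE (G D E : Type*) [AddCommGroup G] [AddCommGroup D]
    [AddCommGroup E] (hD : IsDivisibleGroup D) (hE : IsElementaryGroup E)
    (h : Nonempty (G ≃+ D × E)) : IsSGCB G := by
  obtain ⟨e⟩ := h
  intro N φ hφ
  -- `D × E` is (divisible) ⊕ (squarefree torsion)
  have hDE0 : SGCBAux.DE (D × E) := by
    refine ⟨(AddMonoidHom.inl D E).range, (AddMonoidHom.inr D E).range, ⟨?_, ?_⟩,
      SGCBAux.divisible_range _ hD, ?_⟩
    · rw [disjoint_iff, AddSubgroup.eq_bot_iff_forall]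
      rintro x ⟨⟨d, hd⟩, ⟨e', he'⟩⟩
      have h1 : x.1 = 0 := by rw [← he', AddMonoidHom.inr_apply]
      have h2 : x.2 = 0 := by rw [← hd, AddMonoidHom.inl_apply]
      exact Prod.ext h1 h2
    · rw [codisjoint_iff, eq_top_iff]
      rintro ⟨a, b⟩ -
      exact AddSubgroup.mem_sup.2 ⟨(a, 0), ⟨a, rfl⟩, (0, b), ⟨b, rfl⟩, by
        rw [Prod.mk_add_mk, add_zero, zero_add]⟩
    · rintro x ⟨e', rfl⟩
      obtain ⟨u, hu, hue, husq⟩ := SGCBAux.sqfTG_of_elementary hE e'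
      exact ⟨u, hu, by rw [← map_nsmul, hue, map_zero], husq⟩
  have hDEG : SGCBAux.DE G := SGCBAux.de_of_surj hDE0 e.symm.toAddMonoidHom e.symm.surjective
  have hDEX : SGCBAux.DE (G ⧸ N) :=
    SGCBAux.de_of_surj hDEG (QuotientAddGroup.mk' N) (QuotientAddGroup.mk'_surjective N)
  set ψD : D →+ G ⧸ N := φ.comp (e.symm.toAddMonoidHom.comp (AddMonoidHom.inl D E)) with hψD
  set ψE : E →+ G ⧸ N := φ.comp (e.symm.toAddMonoidHom.comp (AddMonoidHom.inr D E)) with hψE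
  have hADdiv : IsDivisibleGroup ↥ψD.range := SGCBAux.divisible_range _ hD
  have hAEsf : SGCBAux.SqfT ψE.range := SGCBAux.sqfT_range _ (SGCBAux.sqfTG_of_elementary hE)
  have hrange : φ.range = ψD.range ⊔ ψE.range := by
    apply le_antisymm
    · rintro x ⟨g, rfl⟩
      refine AddSubgroup.mem_sup.2 ⟨ψD (e g).1, ⟨(e g).1, rfl⟩, ψE (e g).2, ⟨(e g).2, rfl⟩, ?_⟩
      have hsum : e.symm ((e g).1, 0) + e.symm (0, (e g).2) = g := by
        rw [← map_add]
        have h2 : (((e g).1, (0 : E)) : D × E) + ((0 : D), (e g).2) = e g := by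
          rw [Prod.mk_add_mk, add_zero, zero_add]
        rw [h2, e.symm_apply_apply]
      calc ψD (e g).1 + ψE (e g).2
          = φ (e.symm ((e g).1, 0)) + φ (e.symm (0, (e g).2)) := rfl
        _ = φ (e.symm ((e g).1, 0) + e.symm (0, (e g).2)) := (map_add φ _ _).symm
        _ = φ g := by rw [hsum]
    · apply sup_le
      · rintro x ⟨d, rfl⟩
        exact ⟨_, rfl⟩
      · rintro x ⟨e', rfl⟩
        exact ⟨_, rfl⟩
  have hdisj : ψD.range ⊓ ψE.range = ⊥ := by
    rw [AddSubgroup.eq_bot_iff_forall]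
    rintro x ⟨⟨d, hd⟩, ⟨e', he'⟩⟩
    have hd' : φ (e.symm (d, 0)) = x := hd
    have he'' : φ (e.symm (0, e')) = x := he'
    have h1 : e.symm (d, 0) = e.symm (0, e') := hφ (hd'.trans he''.symm)
    have h2 : ((d, (0 : E)) : D × E) = ((0 : D), e') := e.symm.injective h1
    have hd0 : d = 0 := congrArg Prod.fst h2
    rw [← hd', hd0]
    rw [show ((0 : D), (0 : E)) = (0 : D × E) from rfl, map_zero, map_zero]
  obtain ⟨Y, hY, hAEY⟩ := SGCBAux.split ψD.range ψE.range hADdiv hdisj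
  set pY : (G ⧸ N) →+ ↥Y := (SGCBAux.projOf hY).codRestrict Y (SGCBAux.projOf_mem hY) with hpY
  have hpYsurj : Function.Surjective pY := by
    rintro ⟨y, hy⟩
    exact ⟨y, Subtype.ext (SGCBAux.projOf_left hY hy)⟩
  have hDEY : SGCBAux.DE ↥Y := SGCBAux.de_of_surj hDEX pY hpYsurj
  have hBsf : SGCBAux.SqfT (ψE.range.comap Y.subtype) := by
    rintro x hx
    obtain ⟨u, hu, hux, husq⟩ := hAEsf _ (AddSubgroup.mem_comap.1 hx)
    exact ⟨u, hu, Subtype.ext hux, husq⟩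
  obtain ⟨S₁, S₂, hS₁₂, hessB⟩ := SGCBAux.elem_ess_summand hDEY _ hBsf
  have hessAE : SGCBAux.Ess ψE.range (S₁.map Y.subtype) := SGCBAux.ess_map_of_comap hessB hAEY
  set T := S₁.map Y.subtype with hT
  set T' := S₂.map Y.subtype with hT'
  have hTY : T ≤ Y := AddSubgroup.map_subtype_le _
  have hT'Y : T' ≤ Y := AddSubgroup.map_subtype_le _
  have hTT'sup : T ⊔ T' = Y := by
    rw [hT, hT', ← AddSubgroup.map_sup, hS₁₂.sup_eq_top, ← AddMonoidHom.range_eq_map,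
      AddSubgroup.range_subtype]
  have hTT'inf : T ⊓ T' = ⊥ := by
    rw [AddSubgroup.eq_bot_iff_forall]
    rintro x ⟨hx1, hx2⟩
    rcases AddSubgroup.mem_map.1 hx1 with ⟨s, hs, rfl⟩
    rcases AddSubgroup.mem_map.1 hx2 with ⟨s', hs', heq⟩
    have hss : s' = s := Subtype.val_injective heq
    have hmem : s ∈ S₁ ⊓ S₂ := ⟨hs, by rw [← hss]; exact hs'⟩
    rw [hS₁₂.inf_eq_bot] at hmem
    have hs0 : s = 0 := by simpa using hmem
    rw [hs0, map_zero]
  have hADY : ψD.range ⊓ Y = ⊥ := hY.inf_eq_bot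
  have hess : SGCBAux.Ess φ.range (ψD.range ⊔ T) := by
    rw [hrange]
    refine SGCBAux.ess_sup (SGCBAux.ess_refl _) hessAE ?_
    rw [AddSubgroup.eq_bot_iff_forall]
    rintro x ⟨hx1, hx2⟩
    have hmem : x ∈ ψD.range ⊓ Y := ⟨hx1, hTY hx2⟩
    rw [hADY] at hmem
    simpa using hmem
  refine ⟨ψD.range ⊔ T, T', ⟨?_, ?_⟩, hess.1, ?_⟩
  · rw [disjoint_iff, AddSubgroup.eq_bot_iff_forall]
    rintro x ⟨hx1, hx2⟩
    rcases AddSubgroup.mem_sup.1 hx1 with ⟨a, ha, t, ht, rfl⟩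
    have haY : a ∈ Y := by
      have h2 : a = (a + t) - t := by abel
      rw [h2]
      exact sub_mem (hT'Y hx2) (hTY ht)
    have ha0 : a = 0 := by
      have hmem : a ∈ ψD.range ⊓ Y := ⟨ha, haY⟩
      rw [hADY] at hmem
      simpa using hmem
    have htT' : t ∈ T ⊓ T' := ⟨ht, by rwa [ha0, zero_add] at hx2⟩
    rw [hTT'inf] at htT'
    have ht0 : t = 0 := by simpa using htT'
    rw [ha0, ht0, add_zero]
  · rw [codisjoint_iff, sup_assoc, hTT'sup, hY.sup_eq_top]
  · intro X₀ hX₀le hX₀ne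
    obtain ⟨x, hxX₀, hx0⟩ : ∃ x, x ∈ X₀ ∧ x ≠ 0 := by
      by_contra hcon
      push_neg at hcon
      exact hX₀ne ((AddSubgroup.eq_bot_iff_forall _).2 hcon)
    rcases hess.2 x (hX₀le hxX₀) hx0 with ⟨n, hn1, hn2⟩
    intro hc
    have hmem : n • x ∈ φ.range ⊓ X₀ := ⟨hn1, zsmul_mem hxX₀ n⟩
    rw [hc] at hmem
    exact hn2 (by simpa using hmem)
end

section
/- Let G be an abelian group whose torsion subgroup T is a direct sum of a bounded group and a divisible group. Then T (equivalently, each T_p) is a direct summand of G, i.e., there is a decomposition G = T ⊕ A for some torsion-free subgroup A. -/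
section TorsionSplitAux

variable {G : Type*} [AddCommGroup G]

private def natSmulHom (G : Type*) [AddCommGroup G] (p : ℕ) : G →+ G :=
  AddMonoidHom.mk' (fun x : G => p • x) (fun a b => smul_add p a b)

private lemma natSmulHom_apply (p : ℕ) (x : G) : natSmulHom G p x = p • x := rfl

/-- Lemma 1: if `B ≤ S`, `pB = 0` and `B ∩ pS = 0` (p prime), then `B` is a summand of `S`. -/
private lemma split_lemma_p (p : ℕ) (hp : p.Prime) (S B : AddSubgroup G) (hBS : B ≤ S)
    (hpB : ∀ b ∈ B, p • b = 0)
    (hdisj : ∀ x ∈ B, (∃ y ∈ S, p • y = x) → x = 0) :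
    ∃ K : AddSubgroup G, K ≤ S ∧ B ⊓ K = ⊥ ∧ B ⊔ K = S := by
  classical
  set pS : AddSubgroup G := S.map (natSmulHom G p) with hpSdef
  have hpS_le : pS ≤ S := by
    rintro x hx
    obtain ⟨y, hy, rfl⟩ := hx
    exact AddSubgroup.nsmul_mem S hy p
  have hpS_mem : ∀ y ∈ S, p • y ∈ pS := fun y hy => ⟨y, hy, rfl⟩
  -- Zorn
  set 𝒮 : Set (AddSubgroup G) :=
    {K | K ≤ S ∧ pS ≤ K ∧ ∀ x ∈ B, x ∈ K → x = 0} with h𝒮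
  have hZorn : ∃ m, pS ≤ m ∧ Maximal (· ∈ 𝒮) m := by
    apply zorn_le_nonempty₀ 𝒮 ?_ pS
    · refine ⟨hpS_le, le_rfl, ?_⟩
      intro x hxB hxpS
      obtain ⟨y, hy, rfl⟩ := hxpS
      exact hdisj _ hxB ⟨y, hy, rfl⟩
    · intro c hc hchain y hyc
      refine ⟨sSup c, ?_, fun z hz => le_sSup hz⟩
      have hne : c.Nonempty := ⟨y, hyc⟩
      have hdir : DirectedOn (· ≤ ·) c := hchain.directedOn
      refine ⟨?_, ?_, ?_⟩
      · intro x hx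
        rw [AddSubgroup.mem_sSup_of_directedOn hne hdir] at hx
        obtain ⟨K, hKc, hxK⟩ := hx
        exact (hc hKc).1 hxK
      · exact le_trans ((hc hyc).2.1) (le_sSup hyc)
      · intro x hxB hx
        rw [AddSubgroup.mem_sSup_of_directedOn hne hdir] at hx
        obtain ⟨K, hKc, hxK⟩ := hx
        exact (hc hKc).2.2 x hxB hxK
  obtain ⟨K, hpSK, hKmax⟩ := hZorn
  obtain ⟨hKS, -, hKB⟩ := hKmax.prop
  refine ⟨K, hKS, ?_, ?_⟩
  · rw [eq_bot_iff]
    intro x hx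
    have := hKB x hx.1 hx.2
    simp [this]
  · apply le_antisymm (sup_le hBS hKS)
    intro g hgS
    by_contra hg
    have hgK : g ∉ K := fun h => hg (AddSubgroup.mem_sup_right h)
    set K' : AddSubgroup G := K ⊔ AddSubgroup.closure {g} with hK'
    have hKK' : K ≤ K' := le_sup_left
    have hgK' : g ∈ K' := AddSubgroup.mem_sup_right (AddSubgroup.mem_closure_singleton.mpr ⟨1, one_zsmul g⟩)
    have hK'S : K' ≤ S := sup_le hKS (by
      rw [AddSubgroup.closure_le]; simpa using hgS)
    have hK'not : K' ∉ 𝒮 := by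
      intro hmem
      have := hKmax.le_of_ge hmem hKK'
      exact hgK (this hgK')
    have : ∃ x, x ∈ B ∧ x ∈ K' ∧ x ≠ 0 := by
      by_contra hno
      push_neg at hno
      exact hK'not ⟨hK'S, le_trans hpSK hKK', fun x hx hx' => hno x hx hx'⟩
    obtain ⟨x, hxB, hxK', hxne⟩ := this
    rw [hK', AddSubgroup.mem_sup] at hxK'
    obtain ⟨k, hk, c, hcmem, hkc⟩ := hxK'
    obtain ⟨s, rfl⟩ := AddSubgroup.mem_closure_singleton.mp hcmem
    have hpg : (p : ℤ) • g ∈ K := by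
      have : (p : ℤ) • g = p • g := natCast_zsmul g p
      rw [this]
      exact hpSK (hpS_mem g hgS)
    by_cases hdvd : (p : ℤ) ∣ s
    · obtain ⟨t, rfl⟩ := hdvd
      have hsg : ((p : ℤ) * t) • g ∈ K := by
        rw [mul_comm, mul_zsmul]
        exact AddSubgroup.zsmul_mem K hpg t
      have hxK : x ∈ K := by
        rw [← hkc]
        exact K.add_mem hk hsg
      exact hxne (hKB x hxB hxK)
    · -- coprime case
      have hcop : IsCoprime (p : ℤ) (s : ℤ) :=
        (Nat.prime_iff_prime_int.mp hp).coprime_iff_not_dvd.mpr hdvd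
      obtain ⟨v, u, huv⟩ := hcop
      have hsg : s • g = x - k := by rw [← hkc]; abel
      have : g ∈ B ⊔ K := by
        have hgeq : g = u • (s • g) + v • ((p:ℤ) • g) := by
          rw [← mul_zsmul, ← mul_zsmul, ← add_zsmul, add_comm, huv, one_zsmul]
        rw [hgeq, hsg]
        have h1 : u • (x - k) = u • x + (- (u • k)) := by rw [zsmul_sub]; abel
        rw [h1]
        refine AddSubgroup.add_mem _ (AddSubgroup.add_mem _ ?_ ?_) ?_
        · exact AddSubgroup.mem_sup_left (AddSubgroup.zsmul_mem B hxB u)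
        · exact AddSubgroup.mem_sup_right (AddSubgroup.neg_mem K (AddSubgroup.zsmul_mem K hk u))
        · exact AddSubgroup.mem_sup_right (AddSubgroup.zsmul_mem K hpg v)
      exact hg this

/-- Lemma 2: a pure subgroup `A ≤ S` with `nA = 0` is a summand of `S`. -/
private lemma split_lemma_bounded :
    ∀ (n : ℕ), 0 < n → ∀ (S A : AddSubgroup G), A ≤ S → (∀ a ∈ A, n • a = 0) →
    (∀ (m : ℕ) (a : G), a ∈ A → (∃ y ∈ S, m • y = a) → ∃ a' ∈ A, m • a' = a) →
    ∃ K : AddSubgroup G, K ≤ S ∧ A ⊓ K = ⊥ ∧ A ⊔ K = S := by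
  intro n
  induction n using Nat.strong_induction_on with
  | _ n ih =>
    intro hn S A hAS hbound hpure
    rcases eq_or_lt_of_le (show 1 ≤ n from hn) with h1 | h2
    · -- n = 1 : A = ⊥
      have hA : ∀ a ∈ A, a = 0 := by
        intro a ha
        have := hbound a ha
        rwa [← h1, one_nsmul] at this
      refine ⟨S, le_rfl, ?_, sup_eq_right.mpr hAS⟩
      rw [eq_bot_iff]
      intro x hx
      simp [hA x hx.1]
    · -- n ≥ 2
      have hn2 : 2 ≤ n := h2
      set p := n.minFac with hpdef
      have hp : p.Prime := Nat.minFac_prime (by omega)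
      set n' := n / p with hn'def
      have hnn' : n = p * n' := (Nat.mul_div_cancel' n.minFac_dvd).symm
      have hn'lt : n' < n := Nat.div_lt_self (by omega) hp.one_lt
      have hn'pos : 0 < n' := Nat.div_pos (Nat.minFac_le (by omega)) hp.pos
      set A₁ : AddSubgroup G := A.map (natSmulHom G p) with hA₁def
      set S₁ : AddSubgroup G := S.map (natSmulHom G p) with hS₁def
      have hA₁S₁ : A₁ ≤ S₁ := AddSubgroup.map_mono hAS
      have hA₁A : A₁ ≤ A := by
        rintro x ⟨a, ha, rfl⟩
        exact AddSubgroup.nsmul_mem A ha p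
      have hbound₁ : ∀ a ∈ A₁, n' • a = 0 := by
        rintro x ⟨a, ha, rfl⟩
        show n' • (p • a) = 0
        rw [smul_smul, mul_comm, ← hnn']
        exact hbound a ha
      have hpure₁ : ∀ (m : ℕ) (a : G), a ∈ A₁ → (∃ y ∈ S₁, m • y = a) →
          ∃ a' ∈ A₁, m • a' = a := by
        rintro m a haA₁ ⟨y, hyS₁, hy⟩
        obtain ⟨z, hz, rfl⟩ := hyS₁
        have hy' : (m * p) • z = a := by
          rw [← hy, natSmulHom_apply, mul_smul]
        obtain ⟨a', ha', hmp⟩ := hpure (m * p) a (hA₁A haA₁) ⟨z, hz, hy'⟩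
        refine ⟨p • a', ⟨a', ha', rfl⟩, ?_⟩
        rw [smul_smul]
        exact hmp
      obtain ⟨C, hCS₁, hA₁C, hA₁Csup⟩ := ih n' hn'lt hn'pos S₁ A₁ hA₁S₁ hbound₁ hpure₁
      -- L = {x ∈ S | p • x ∈ C}
      set L : AddSubgroup G := S ⊓ C.comap (natSmulHom G p) with hLdef
      set B : AddSubgroup G := A ⊓ L with hBdef
      have hAC0 : ∀ x, x ∈ A → x ∈ C → x = 0 := by
        intro x hxA hxC
        obtain ⟨z, hz, hzx⟩ := hCS₁ hxC
        rw [natSmulHom_apply] at hzx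
        obtain ⟨a', ha', hpa'⟩ := hpure p x hxA ⟨z, hz, hzx⟩
        have hxA₁ : x ∈ A₁ := ⟨a', ha', by rw [natSmulHom_apply, hpa']⟩
        have : x ∈ A₁ ⊓ C := ⟨hxA₁, hxC⟩
        rwa [hA₁C, AddSubgroup.mem_bot] at this
      have hBp : ∀ b ∈ B, p • b = 0 := by
        rintro b ⟨hbA, hbS, hbC⟩
        have h1 : p • b ∈ A₁ := ⟨b, hbA, rfl⟩
        have : p • b ∈ A₁ ⊓ C := ⟨h1, hbC⟩
        rwa [hA₁C, AddSubgroup.mem_bot] at this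
      have hdisj : ∀ x ∈ B, (∃ y ∈ L, p • y = x) → x = 0 := by
        rintro x hxB ⟨y, ⟨hyS, hyC⟩, rfl⟩
        exact hAC0 _ hxB.1 hyC
      obtain ⟨K, hKL, hBK, hBKsup⟩ :=
        split_lemma_p p hp L B inf_le_right hBp hdisj
      have hLS : L ≤ S := inf_le_left
      refine ⟨K, hKL.trans hLS, ?_, ?_⟩
      · rw [eq_bot_iff]
        intro x hx
        have hxB : x ∈ B := ⟨hx.1, hKL hx.2⟩
        have : x ∈ B ⊓ K := ⟨hxB, hx.2⟩
        rwa [hBK] at this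
      · apply le_antisymm (sup_le hAS (hKL.trans hLS))
        intro g hgS
        have hpg : p • g ∈ S₁ := ⟨g, hgS, rfl⟩
        rw [← hA₁Csup, AddSubgroup.mem_sup] at hpg
        obtain ⟨a₁, ha₁, c, hc, hac⟩ := hpg
        obtain ⟨a, ha, rfl⟩ := ha₁
        have hga : g - a ∈ L := by
          refine ⟨S.sub_mem hgS (hAS ha), ?_⟩
          show p • (g - a) ∈ C
          rw [smul_sub]
          have : p • g - p • a = c := by
            rw [← hac]; show (p • a : G) + c - p • a = c; abel
          rwa [this]
        have hLsub : L ≤ A ⊔ K := by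
          rw [← hBKsup]
          exact sup_le (le_trans inf_le_left le_sup_left) le_sup_right
        have : g = a + (g - a) := by abel
        rw [this]
        exact AddSubgroup.add_mem _ (AddSubgroup.mem_sup_left ha) (hLsub hga)

/-- A divisible subgroup is a direct summand. -/
private lemma divisible_summand (D : AddSubgroup G)
    (hdvd : ∀ x ∈ D, ∀ n : ℕ, 0 < n → ∃ y ∈ D, n • y = x) :
    ∃ C : AddSubgroup G, IsCompl D C := by
  classical
  have hbaer : Module.Baer ℤ ↥D := by
    intro I g
    obtain ⟨a, ha⟩ := (IsPrincipalIdealRing.principal I).principal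
    by_cases ha0 : a = 0
    · refine ⟨0, fun x hmem => ?_⟩
      have hx0 : x = 0 := by
        have := hmem
        rw [ha, ha0, Submodule.span_zero_singleton, Submodule.mem_bot] at this
        exact this
      subst hx0
      have : (⟨0, hmem⟩ : I) = 0 := rfl
      rw [this, map_zero, map_zero]
    · have haI : a ∈ I := by rw [ha]; exact Ideal.subset_span rfl
      set d₀ : ↥D := g ⟨a, haI⟩ with hd₀
      obtain ⟨y, hyD, hy⟩ := hdvd d₀.val d₀.property a.natAbs (Int.natAbs_pos.mpr ha0)
      have hy' : (a.natAbs : ℤ) • (⟨y, hyD⟩ : ↥D) = d₀ := by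
        rw [natCast_zsmul]
        exact Subtype.ext (by simpa using hy)
      have hsign : ∃ y' : ↥D, a • y' = d₀ := by
        rcases Int.natAbs_eq a with h | h
        · exact ⟨⟨y, hyD⟩, by rw [h]; exact hy'⟩
        · refine ⟨-⟨y, hyD⟩, ?_⟩
          rw [h, neg_smul, smul_neg, neg_neg]
          exact hy'
      obtain ⟨y', hy'⟩ := hsign
      refine ⟨LinearMap.toSpanSingleton ℤ ↥D y', fun x hmem => ?_⟩
      obtain ⟨c, hc⟩ := Ideal.mem_span_singleton'.mp (ha ▸ hmem)
      have hxa : (⟨x, hmem⟩ : I) = c • (⟨a, haI⟩ : I) := by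
        apply Subtype.ext
        simp [← hc, smul_eq_mul]
      rw [hxa, map_smul, ← hd₀, ← hy']
      show x • y' = c • (a • y')
      rw [← mul_smul, ← hc]
  obtain ⟨π, hπ⟩ := hbaer.extension_property D.subtype.toIntLinearMap Subtype.val_injective
    LinearMap.id
  have hπ' : ∀ d : ↥D, π d.val = d := fun d => congrFun (congrArg DFunLike.coe hπ) d
  refine ⟨(LinearMap.ker π).toAddSubgroup, ?_, ?_⟩
  · rw [disjoint_iff, eq_bot_iff]
    rintro x ⟨hxD, hxK⟩
    have h1 : π x = ⟨x, hxD⟩ := hπ' ⟨x, hxD⟩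
    have h2 : π x = 0 := hxK
    rw [h2] at h1
    have : x = 0 := by
      have := congrArg Subtype.val h1
      simpa using this.symm
    simp [this]
  · rw [codisjoint_iff, eq_top_iff]
    intro x _
    rw [AddSubgroup.mem_sup]
    refine ⟨(π x).val, (π x).property, x - (π x).val, ?_, by abel⟩
    show π (x - (π x).val) = 0
    rw [map_sub, hπ' (π x), sub_self]

end TorsionSplitAux

theorem torsion_splits_of_bounded_plus_divisible (G : Type*) [AddCommGroup G]
    (h : ∃ Bd Dv : AddSubgroup ↥(torsionSub G), IsCompl Bd Dv ∧
      (∃ n : ℕ, 0 < n ∧ ∀ x ∈ Bd, n • x = 0) ∧ IsDivisibleGroup ↥Dv) :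
    ∃ A : AddSubgroup G, IsCompl (torsionSub G) A ∧
      ∀ x ∈ A, (∃ n : ℕ, 0 < n ∧ n • x = 0) → x = 0 := by
  obtain ⟨Bd, Dv, hcompl, ⟨n, hn, hbd⟩, hdiv⟩ := h
  set D : AddSubgroup G := Dv.map (torsionSub G).subtype with hD
  have hDT : D ≤ torsionSub G := by
    rintro x ⟨d, hd, rfl⟩
    exact d.property
  have hDdvd : ∀ x ∈ D, ∀ k : ℕ, 0 < k → ∃ y ∈ D, k • y = x := by
    rintro x ⟨d, hd, rfl⟩ k hk
    obtain ⟨y, hy⟩ := hdiv (⟨d, hd⟩ : ↥Dv) k hk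
    refine ⟨((y : ↥(torsionSub G)) : G), ⟨y.1, y.2, rfl⟩, ?_⟩
    have h1 : ((k • y : ↥Dv) : ↥(torsionSub G)) = d := congrArg Subtype.val hy
    have h2 : (((k • y : ↥Dv) : ↥(torsionSub G)) : G) = d.val := congrArg Subtype.val h1
    simpa using h2
  obtain ⟨C, hC⟩ := divisible_summand D hDdvd
  have hDCbot : ∀ x, x ∈ D → x ∈ C → x = 0 := by
    intro x h1 h2
    have h3 := hC.disjoint
    rw [AddSubgroup.disjoint_def] at h3
    exact h3 h1 h2
  have hboundT' : ∀ a ∈ torsionSub G ⊓ C, n • a = 0 := by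
    rintro a ⟨haT, haC⟩
    have hsup : Bd ⊔ Dv = ⊤ := codisjoint_iff.mp hcompl.codisjoint
    have hmem : (⟨a, haT⟩ : ↥(torsionSub G)) ∈ Bd ⊔ Dv := hsup ▸ AddSubgroup.mem_top _
    rw [AddSubgroup.mem_sup] at hmem
    obtain ⟨b, hb, d, hd, hbd'⟩ := hmem
    have h1 : n • (⟨a, haT⟩ : ↥(torsionSub G)) = n • d := by
      rw [← hbd', smul_add, hbd b hb, zero_add]
    have h2 : n • a ∈ D := by
      refine ⟨n • d, AddSubgroup.nsmul_mem Dv hd n, ?_⟩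
      have h3 := congrArg Subtype.val h1
      simpa using h3.symm
    exact hDCbot _ h2 (AddSubgroup.nsmul_mem C haC n)
  have hpureT' : ∀ (m : ℕ) (a : G), a ∈ torsionSub G ⊓ C → (∃ y ∈ C, m • y = a) →
      ∃ a' ∈ torsionSub G ⊓ C, m • a' = a := by
    rintro m a ⟨haT, haC⟩ ⟨y, hyC, hy⟩
    rcases Nat.eq_zero_or_pos m with rfl | hm
    · have ha0 : a = 0 := by rw [← hy, zero_smul]
      exact ⟨0, (torsionSub G ⊓ C).zero_mem, by rw [smul_zero, ha0]⟩
    · have hyT : y ∈ torsionSub G := by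
        obtain ⟨k, hk, hka⟩ := haT
        exact ⟨k * m, Nat.mul_pos hk hm, by rw [mul_smul, hy, hka]⟩
      exact ⟨y, ⟨hyT, hyC⟩, hy⟩
  obtain ⟨K, hKC, hTK, hTKsup⟩ :=
    split_lemma_bounded n hn C (torsionSub G ⊓ C) inf_le_right hboundT' hpureT'
  refine ⟨K, ⟨?_, ?_⟩, ?_⟩
  · rw [disjoint_iff, eq_bot_iff]
    rintro x ⟨hxT, hxK⟩
    have : x ∈ (torsionSub G ⊓ C) ⊓ K := ⟨⟨hxT, hKC hxK⟩, hxK⟩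
    rwa [hTK] at this
  · rw [codisjoint_iff, eq_top_iff]
    intro g _
    have hg : g ∈ D ⊔ C := (codisjoint_iff.mp hC.codisjoint) ▸ AddSubgroup.mem_top g
    rw [AddSubgroup.mem_sup] at hg
    obtain ⟨d, hd, c, hc, rfl⟩ := hg
    have hcTK : c ∈ (torsionSub G ⊓ C) ⊔ K := by rw [hTKsup]; exact hc
    rw [AddSubgroup.mem_sup] at hcTK
    obtain ⟨t, ht, k, hk, rfl⟩ := hcTK
    rw [AddSubgroup.mem_sup]
    exact ⟨d + t, (torsionSub G).add_mem (hDT hd) ht.1, k, hk, by abel⟩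
  · intro x hxK htor
    have hxT : x ∈ torsionSub G := htor
    have : x ∈ (torsionSub G ⊓ C) ⊓ K := ⟨⟨hxT, hKC hxK⟩, hxK⟩
    rwa [hTK, AddSubgroup.mem_bot] at this
end
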